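/- arXiv:2409.12945 — 10 statements merged into one kernel-verified Lean document; each statement's English description precedes it below -/
import Mathlib

section
/- Every family F of subsets of [n] shatters at least |F| distinct subsets of [n] (Pajor's lemma). -/
open Finset

def FamShatters {n : ℕ} (F : Finset (Finset (Fin n))) (A : Finset (Fin n)) : Prop :=
  ∀ A' ⊆ A, ∃ S ∈ F, S ∩ A = A'

open Classical in
/-- Pajor's lemma: every family `F` of subsets of `[n]` shatters at least `|F|`
distinct subsets of `[n]`. -/
theorem stmt1 (n : ℕ) (F : Finset (Finset (Fin n))) :
    F.card ≤ ((Finset.univ : Finset (Finset (Fin n))).filter (fun A => FamShatters F A)).card := by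
  refine F.card_le_card_shatterer.trans (Finset.card_le_card ?_)
  intro A hA
  rw [Finset.mem_shatterer] at hA
  simp only [Finset.mem_filter, Finset.mem_univ, true_and]
  intro A' hA'
  obtain ⟨u, hu, huA⟩ := hA hA'
  exact ⟨u, hu, by rwa [Finset.inter_comm]⟩
end

section
/- Let H be a d-uniform hypergraph with Lagrangian λ(H). Then for every n, the maximum over n-variable weightings of the Lagrangian polynomial with weights in (1/n)·ℤ≥0 summing to 1, multiplied by n^d, is at most λ(H)·n^d; and there exists a random construction achieving expected value d!·λ(H)·C(n,d) shattered sub-configurations. Concretely: d!·λ(H(k,d))·C(n,d) ≤ f(n,k,d) ≤ λ(H(k,d))·n^d for all n ≥ d ≥ 1 and k ≥ 2^d. -/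
open Finset

/-- A choice `s` of columns of the binary matrix `M` forms a shattered submatrix if
every pattern of values on the columns in `s` appears in some row. -/
def ColsShattered {k n : ℕ} (M : Fin k → Fin n → Bool) (s : Finset (Fin n)) : Prop :=
  ∀ g : Fin n → Bool, ∃ i : Fin k, ∀ j ∈ s, M i j = g j

open Classical in
/-- The number of shattered `k × d` submatrices of `M`. -/
noncomputable def shatteredCount {k n : ℕ} (d : ℕ) (M : Fin k → Fin n → Bool) : ℕ :=
  ((Finset.univ.powersetCard d).filter (fun s => ColsShattered M s)).card

open Classical in
/-- `fMat n k d` : the maximum number of shattered `k × d` submatrices of a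
binary `k × n` matrix. -/
noncomputable def fMat (n k d : ℕ) : ℕ :=
  (Finset.univ : Finset (Fin k → Fin n → Bool)).sup (fun M => shatteredCount d M)

/-- A set `e` of `d` binary vectors of length `k` is an edge of `H(k,d)` iff the
`k × d` matrix with these vectors as columns is shattered. -/
def IsEdgeH (k d : ℕ) (e : Finset (Fin k → Bool)) : Prop :=
  e.card = d ∧ ∀ g : (Fin k → Bool) → Bool, ∃ i : Fin k, ∀ v ∈ e, v i = g v

open Classical in
/-- The Lagrangian polynomial of `H(k,d)` evaluated at the weighting `x`. -/
noncomputable def lagPoly (k d : ℕ) (x : (Fin k → Bool) → ℝ) : ℝ :=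
  ∑ e ∈ (Finset.univ.powersetCard d).filter (fun e => IsEdgeH k d e), ∏ v ∈ e, x v

/-- The Lagrangian of `H(k,d)` : the supremum of the Lagrangian polynomial over
the probability simplex. -/
noncomputable def lagH (k d : ℕ) : ℝ :=
  sSup {y : ℝ | ∃ x : (Fin k → Bool) → ℝ,
    (∀ v, 0 ≤ x v) ∧ (∑ v, x v = 1) ∧ lagPoly k d x = y}


/-!
For the lower bound, fix a weighting `x` of the vectors of length `k` and draw the `n` columns
of a `k × n` matrix independently according to `x`. A set of `d` columns is shattered exactly
when the columns are distinct and form an edge of `H(k,d)`, which happens with probability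
`d! · p(x)` for the Lagrangian polynomial `p`; so some matrix has at least `d! · p(x) · C(n,d)`
shattered submatrices.

For the upper bound, let `m v` be the number of columns of a matrix equal to `v`. A shattered set
of columns has distinct columns forming an edge `e`, so it is one of the `∏ v ∈ e, m v` ways of
picking a column of each kind in `e`. Hence there are at most `p(m) = n ^ d · p(m / n)`
shattered sets, and `p(m / n) ≤ λ`.
-/

open Function

section Shattering

variable {k : ℕ}

def IsShatteredFamily {ι : Type*} (a : ι → Fin k → Bool) : Prop :=
  ∀ g : ι → Bool, ∃ i, ∀ j, a j i = g j

theorem isShatteredFamily_iff_injective_and_isEdgeH {ι : Type*} [Fintype ι]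
    [DecidableEq (Fin k → Bool)] (a : ι → Fin k → Bool) :
    IsShatteredFamily a ↔ Injective a ∧ IsEdgeH k (Fintype.card ι) (univ.image a) := by
  classical
  constructor
  · intro h
    have hinj : Injective a := by
      intro j₁ j₂ ha
      obtain ⟨i, hi⟩ := h fun j => decide (j = j₁)
      have := hi j₂
      rw [← ha, hi j₁] at this
      simpa [eq_comm] using this
    refine ⟨hinj, by rw [card_image_of_injective _ hinj, card_univ], fun g => ?_⟩
    obtain ⟨i, hi⟩ := h (g ∘ a)
    exact ⟨i, by simpa using hi⟩
  · rintro ⟨hinj, -, hedge⟩ g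
    obtain ⟨i, hi⟩ := hedge (extend a g fun _ => false)
    exact ⟨i, fun j => by
      simpa [hinj.extend_apply] using hi (a j) (mem_image_of_mem a (mem_univ j))⟩

def ofCols {n : ℕ} (c : Fin n → Fin k → Bool) : Fin k → Fin n → Bool := fun i j => c j i

theorem colsShattered_ofCols_iff {n : ℕ} (c : Fin n → Fin k → Bool) (s : Finset (Fin n)) :
    ColsShattered (ofCols c) s ↔ IsShatteredFamily fun j : s => c j := by
  constructor
  · intro h g
    obtain ⟨i, hi⟩ := h fun j => if hj : j ∈ s then g ⟨j, hj⟩ else false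
    exact ⟨i, fun j => by simpa [ofCols] using hi j j.2⟩
  · intro h g
    obtain ⟨i, hi⟩ := h fun j => g j
    exact ⟨i, fun j hj => hi ⟨j, hj⟩⟩

theorem ColsShattered.injOn_and_isEdgeH {n : ℕ} {c : Fin n → Fin k → Bool} {s : Finset (Fin n)}
    (h : ColsShattered (ofCols c) s) : Set.InjOn c s ∧ IsEdgeH k #s (s.image c) := by
  classical
  rw [colsShattered_ofCols_iff, isShatteredFamily_iff_injective_and_isEdgeH,
    Fintype.card_coe] at h
  refine ⟨Set.injOn_iff_injective.mpr h.1, ?_⟩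
  convert h.2 using 2
  ext
  simp

end Shattering

section Counting

variable {ι α : Type*} [Fintype ι] [DecidableEq ι] [Fintype α]

theorem sum_prod_mul_restrict {R : Type*} [CommSemiring R] (x : α → R) (hx : ∑ v, x v = 1)
    (s : Finset ι) (F : (s → α) → R) :
    ∑ c : ι → α, (∏ i, x (c i)) * F (fun j : s => c j) =
      ∑ a : s → α, (∏ j, x (a j)) * F a := by
  have hmarg : ∑ b : {i // i ∉ s} → α, ∏ i, x (b i) = 1 := by
    rw [← Fintype.prod_sum]; simp [hx]
  calc ∑ c : ι → α, (∏ i, x (c i)) * F (fun j : s => c j)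
      = ∑ ab : (s → α) × ({i // i ∉ s} → α), (∏ j, x (ab.1 j)) * F ab.1 * ∏ i, x (ab.2 i) :=
        Fintype.sum_equiv (Equiv.piEquivPiSubtypeProd (· ∈ s) fun _ => α) _ _ fun c => by
          rw [← Fintype.prod_subtype_mul_prod_subtype (· ∈ s)]
          simp only [Equiv.piEquivPiSubtypeProd_apply]
          rw [mul_right_comm]
          congr 2
          -- the two products over `s` carry different `Fintype` instances on the subtype
          exact Finset.prod_congr (by ext; simp) fun _ _ => rfl
    _ = ∑ a : s → α, (∏ j, x (a j)) * F a := by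
        simp only [Fintype.sum_prod_type, ← mul_sum, hmarg, mul_one]

variable [DecidableEq α] [∀ a : ι → α, Decidable (Injective a)]

theorem card_filter_injective_image_eq (e : Finset α) (he : #e = Fintype.card ι) :
    #{a : ι → α | Injective a ∧ univ.image a = e} = (Fintype.card ι).factorial := by
  have hmem (a : ι → α) (ha : univ.image a = e) (i : ι) : a i ∈ e :=
    ha ▸ mem_image_of_mem a (mem_univ i)
  let toEquiv : {a : ι → α // Injective a ∧ univ.image a = e} ≃ (ι ≃ e) :=
    { toFun a := Equiv.ofBijective (fun i => ⟨a.1 i, hmem a.1 a.2.2 i⟩)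
        ⟨fun i j h => a.2.1 (congrArg Subtype.val h), fun v => by
          obtain ⟨i, -, hi⟩ := mem_image.mp (show v.1 ∈ univ.image a.1 by rw [a.2.2]; exact v.2)
          exact ⟨i, Subtype.ext hi⟩⟩
      invFun f := ⟨fun i => f i, Subtype.val_injective.comp f.injective, by
        ext v
        refine ⟨fun hv => ?_, fun hv => mem_image.mpr ⟨f.symm ⟨v, hv⟩, mem_univ _, by simp⟩⟩
        obtain ⟨i, -, rfl⟩ := mem_image.mp hv
        exact (f i).2⟩
      left_inv a := rfl
      right_inv f := by ext; rfl }
  rw [← Fintype.card_subtype, Fintype.card_congr toEquiv,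
    Fintype.card_equiv (Fintype.equivOfCardEq (by simp [he]))]

theorem sum_injective_image {M : Type*} [AddCommMonoid M] (G : Finset α → M) :
    ∑ a : ι → α, (if Injective a then G (univ.image a) else 0) =
      (Fintype.card ι).factorial • ∑ e ∈ univ.powersetCard (Fintype.card ι), G e := by
  rw [← sum_filter, smul_sum,
    ← sum_fiberwise_of_maps_to (g := fun a => univ.image a) (t := univ.powersetCard _)]
  · refine sum_congr rfl fun e he => ?_
    rw [mem_powersetCard] at he
    rw [sum_congr rfl fun a ha => congrArg G (mem_filter.mp ha).2, sum_const, filter_filter,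
      card_filter_injective_image_eq e he.2]
  · intro a ha
    rw [mem_filter] at ha
    simp [mem_powersetCard, card_image_of_injective _ ha.2]

end Counting

section Lagrangian

variable {k d : ℕ}

theorem lagPoly_smul (t : ℝ) (x : (Fin k → Bool) → ℝ) :
    lagPoly k d (t • x) = t ^ d * lagPoly k d x := by
  classical
  rw [lagPoly, lagPoly, mul_sum]
  refine sum_congr rfl fun e he => ?_
  rw [← (mem_filter.mp he).2.1, ← prod_const, ← prod_mul_distrib]
  rfl

theorem bddAbove_lagPoly_simplex :
    BddAbove {y : ℝ | ∃ x : (Fin k → Bool) → ℝ,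
      (∀ v, 0 ≤ x v) ∧ (∑ v, x v = 1) ∧ lagPoly k d x = y} := by
  classical
  refine ⟨#{e ∈ univ.powersetCard d | IsEdgeH k d e}, ?_⟩
  rintro _ ⟨x, hx0, hx1, rfl⟩
  have hle : ∀ v, x v ≤ 1 := fun v => hx1 ▸ single_le_sum (fun w _ => hx0 w) (mem_univ v)
  calc lagPoly k d x ≤ ∑ _e ∈ univ.powersetCard d with IsEdgeH k d _e, (1 : ℝ) :=
        sum_le_sum fun e _ => prod_le_one (fun v _ => hx0 v) fun v _ => hle v
    _ = _ := by rw [sum_const, nsmul_one]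

theorem lagPoly_le_lagH {x : (Fin k → Bool) → ℝ} (hx0 : ∀ v, 0 ≤ x v) (hx1 : ∑ v, x v = 1) :
    lagPoly k d x ≤ lagH k d :=
  le_csSup bddAbove_lagPoly_simplex ⟨x, hx0, hx1, rfl⟩

theorem lagPoly_le_lagH_mul_sum_pow {y : (Fin k → Bool) → ℝ} (hy : ∀ v, 0 ≤ y v) :
    lagPoly k d y ≤ lagH k d * (∑ v, y v) ^ d := by
  have ht0 : 0 ≤ ∑ v, y v := sum_nonneg fun v _ => hy v
  obtain ⟨z, hz0, hz1, hyz⟩ : ∃ z : (Fin k → Bool) → ℝ,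
      (∀ v, 0 ≤ z v) ∧ ∑ v, z v = 1 ∧ y = (∑ v, y v) • z := by
    rcases ht0.eq_or_lt with ht | ht
    · refine ⟨fun _ => (Fintype.card (Fin k → Bool) : ℝ)⁻¹, fun _ => by positivity,
        by simp, ?_⟩
      have := (sum_eq_zero_iff_of_nonneg fun v _ => hy v).mp ht.symm
      ext v
      simp [← ht, this v]
    · refine ⟨(∑ v, y v)⁻¹ • y, fun v => by simpa using mul_nonneg (inv_nonneg.mpr ht.le) (hy v),
        by simp [← mul_sum, inv_mul_cancel₀ ht.ne'], by simp [smul_smul, mul_inv_cancel₀ ht.ne']⟩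
  calc lagPoly k d y = (∑ v, y v) ^ d * lagPoly k d z := by rw [← lagPoly_smul, ← hyz]
    _ ≤ lagH k d * (∑ v, y v) ^ d := by
      rw [mul_comm]
      exact mul_le_mul_of_nonneg_right (lagPoly_le_lagH hz0 hz1) (pow_nonneg ht0 d)

end Lagrangian

section LowerBound

variable {n k : ℕ}

open Classical in
theorem sum_prod_mul_indicator_colsShattered {x : (Fin k → Bool) → ℝ} (hx : ∑ v, x v = 1)
    (s : Finset (Fin n)) :
    ∑ c : Fin n → Fin k → Bool, (∏ j, x (c j)) * (if ColsShattered (ofCols c) s then 1 else 0) =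
      (#s).factorial * lagPoly k #s x := by
  calc _ = ∑ c : Fin n → Fin k → Bool,
        (∏ j, x (c j)) * (if IsShatteredFamily fun j : s => c j then 1 else 0) := by
        simp only [colsShattered_ofCols_iff]
    _ = ∑ a : s → Fin k → Bool, (∏ j, x (a j)) * (if IsShatteredFamily a then 1 else 0) :=
        sum_prod_mul_restrict x hx s fun a => if IsShatteredFamily a then 1 else 0
    _ = ∑ a : s → Fin k → Bool, if Injective a then
          (if IsEdgeH k #s (univ.image a) then ∏ v ∈ univ.image a, x v else 0) else 0 := by
        refine Fintype.sum_congr _ _ fun a => ?_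
        simp only [isShatteredFamily_iff_injective_and_isEdgeH, Fintype.card_coe]
        by_cases ha : Injective a
        · simp [ha, prod_image ha.injOn]
        · simp [ha]
    _ = (#s).factorial * lagPoly k #s x := by
        rw [sum_injective_image fun e => if IsEdgeH k #s e then ∏ v ∈ e, x v else 0,
          Fintype.card_coe, lagPoly, sum_filter, nsmul_eq_mul]

theorem factorial_mul_lagPoly_mul_choose_le_fMat (d : ℕ) {x : (Fin k → Bool) → ℝ}
    (hx0 : ∀ v, 0 ≤ x v) (hx1 : ∑ v, x v = 1) :
    (d.factorial : ℝ) * lagPoly k d x * n.choose d ≤ fMat n k d := by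
  classical
  have hprob : ∑ c : Fin n → Fin k → Bool, ∏ j, x (c j) = 1 := by
    rw [← Fintype.prod_sum, hx1, prod_const_one]
  calc (d.factorial : ℝ) * lagPoly k d x * n.choose d
      = ∑ s ∈ univ.powersetCard d, ∑ c : Fin n → Fin k → Bool,
          (∏ j, x (c j)) * (if ColsShattered (ofCols c) s then 1 else 0) := by
        rw [sum_congr rfl fun s hs => by
          rw [sum_prod_mul_indicator_colsShattered hx1, (mem_powersetCard.mp hs).2], sum_const,
          card_powersetCard, card_univ, Fintype.card_fin, nsmul_eq_mul]
        ring
    _ = ∑ c : Fin n → Fin k → Bool, (∏ j, x (c j)) * shatteredCount d (ofCols c) := by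
        rw [sum_comm]
        refine Fintype.sum_congr _ _ fun c => ?_
        rw [← mul_sum, shatteredCount, card_filter]
        push_cast
        rfl
    _ ≤ ∑ c : Fin n → Fin k → Bool, (∏ j, x (c j)) * fMat n k d :=
        sum_le_sum fun c _ => mul_le_mul_of_nonneg_left
          (Nat.cast_le.mpr (le_sup (f := shatteredCount d) (mem_univ _)))
          (prod_nonneg fun j _ => hx0 _)
    _ = fMat n k d := by rw [← sum_mul, hprob, one_mul]

theorem factorial_mul_lagH_mul_choose_le_fMat (d : ℕ) :
    (d.factorial : ℝ) * lagH k d * n.choose d ≤ fMat n k d := by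
  have hc : (0 : ℝ) ≤ d.factorial * n.choose d := by positivity
  rw [mul_right_comm, lagH, ← smul_eq_mul, ← Real.sSup_smul_of_nonneg hc]
  refine Real.sSup_le ?_ (Nat.cast_nonneg _)
  rintro _ ⟨_, ⟨x, hx0, hx1, rfl⟩, rfl⟩
  convert factorial_mul_lagPoly_mul_choose_le_fMat d hx0 hx1 using 1
  simp only [smul_eq_mul]
  ring

end LowerBound

section UpperBound

theorem card_filter_injOn_image_eq_le {β α : Type*} [Fintype β] [DecidableEq β] [DecidableEq α]
    (c : β → α) (e : Finset α) [DecidablePred fun s : Finset β => Set.InjOn c s ∧ s.image c = e] :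
    #{s : Finset β | Set.InjOn c s ∧ s.image c = e} ≤ ∏ v ∈ e, #{j | c j = v} := by
  calc #{s : Finset β | Set.InjOn c s ∧ s.image c = e}
      ≤ #(Fintype.piFinset fun v : e => ({j | c j = v} : Finset β)) := by
        refine card_le_card_of_surjOn (fun σ => univ.image σ) fun s hs => ?_
        obtain ⟨hinj, himg⟩ := (mem_filter.mp hs).2
        have hex (v : e) : ∃ j ∈ s, c j = v := mem_image.mp (himg ▸ v.2)
        choose σ hσs hσc using hex
        refine ⟨σ, by simp [hσc], ?_⟩
        ext j
        refine ⟨fun hj => ?_, fun hj => ?_⟩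
        · obtain ⟨v, -, rfl⟩ := mem_image.mp hj
          exact hσs v
        · let v : e := ⟨c j, himg ▸ mem_image_of_mem c hj⟩
          exact mem_image.mpr ⟨v, mem_univ _, hinj (hσs v) hj (hσc v)⟩
    _ = ∏ v ∈ e, #{j | c j = v} := by
        rw [Fintype.card_piFinset, prod_coe_sort e fun v => #{j | c j = v}]

variable {n k : ℕ}

open Classical in
theorem shatteredCount_ofCols_le (d : ℕ) (c : Fin n → Fin k → Bool) :
    shatteredCount d (ofCols c) ≤
      ∑ e ∈ univ.powersetCard d with IsEdgeH k d e, ∏ v ∈ e, #{j | c j = v} := by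
  rw [shatteredCount, card_eq_sum_card_fiberwise (f := fun s => s.image c)]
  · refine sum_le_sum fun e _ => (card_le_card fun s hs => ?_).trans
      (card_filter_injOn_image_eq_le c e)
    simp only [mem_filter] at hs ⊢
    exact ⟨mem_univ s, hs.1.2.injOn_and_isEdgeH.1, hs.2⟩
  · intro s hs
    simp only [coe_filter, mem_powersetCard, Set.mem_ofPred_eq] at hs ⊢
    obtain ⟨hinj, hedge⟩ := hs.2.injOn_and_isEdgeH
    rw [hs.1.2] at hedge
    exact ⟨⟨subset_univ _, hedge.1⟩, hedge⟩

theorem shatteredCount_le_lagH_mul_pow (d : ℕ) (M : Fin k → Fin n → Bool) :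
    (shatteredCount d M : ℝ) ≤ lagH k d * n ^ d := by
  classical
  set c : Fin n → Fin k → Bool := fun j i => M i j
  have hsum : ∑ v, (#{j | c j = v} : ℝ) = n := by
    rw [← Nat.cast_sum, sum_card_fiberwise_eq_card_filter,
      filter_true_of_mem fun _ _ => mem_univ _, card_univ, Fintype.card_fin]
  calc (shatteredCount d M : ℝ)
      ≤ ∑ e ∈ univ.powersetCard d with IsEdgeH k d e, ∏ v ∈ e, (#{j | c j = v} : ℝ) := by
        exact_mod_cast shatteredCount_ofCols_le d c
    _ = lagPoly k d fun v => (#{j | c j = v} : ℝ) := by rw [lagPoly]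
    _ ≤ lagH k d * n ^ d := hsum ▸ lagPoly_le_lagH_mul_sum_pow fun v => Nat.cast_nonneg _

end UpperBound

theorem stmt3_general (n k d : ℕ) :
    (d.factorial : ℝ) * lagH k d * (n.choose d) ≤ (fMat n k d : ℝ) ∧
      (fMat n k d : ℝ) ≤ lagH k d * (n : ℝ) ^ d := by
  refine ⟨factorial_mul_lagH_mul_choose_le_fMat d, ?_⟩
  obtain ⟨M, -, hM⟩ := exists_mem_eq_sup univ univ_nonempty fun M => shatteredCount d M
  rw [fMat, hM]
  exact shatteredCount_le_lagH_mul_pow d M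

theorem stmt3 (n k d : ℕ) (hd : 1 ≤ d) (hn : d ≤ n) (hk : 2 ^ d ≤ k) :
    (d.factorial : ℝ) * lagH k d * (n.choose d) ≤ (fMat n k d : ℝ) ∧
      (fMat n k d : ℝ) ≤ lagH k d * (n : ℝ) ^ d :=
  stmt3_general n k d
end

section
/- For integers d ≥ 1, k ≥ 2^(d+1), and n ≥ d+1, one has f(n, k, d+1) ≤ (n/(d+1)) · f(n−1, ⌊k/2⌋, d). -/
open Finset

open Classical in
lemma key {k m d c : ℕ} (hc : 0 < c) (M : Fin k → Fin (m+1) → Bool) (j : Fin (m+1))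
    (hb : ∃ b : Bool, ((univ : Finset (Fin k)).filter (fun i => M i j = b)).card ≤ c) :
    (((univ.powersetCard (d+1)).filter (fun s => ColsShattered M s)).filter
      (fun s => j ∈ s)).card ≤ fMat m c d := by
  classical
  obtain ⟨b, hbc⟩ := hb
  set A : Finset (Fin k) := univ.filter (fun i => M i j = b) with hA
  by_cases hAne : A.Nonempty
  case neg =>
    -- no row has value b at column j, so no shattered set contains j
    have : (((univ.powersetCard (d+1)).filter (fun s => ColsShattered M s)).filter
        (fun s => j ∈ s)) = ∅ := by
      rw [Finset.eq_empty_iff_forall_notMem]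
      intro s hs
      simp only [Finset.mem_filter] at hs
      obtain ⟨⟨_, hsh⟩, hjs⟩ := hs
      obtain ⟨i, hi⟩ := hsh (fun _ => b)
      exact hAne ⟨i, by simp [hA, hi j hjs]⟩
    simp [this]
  case pos =>
    obtain ⟨a0, ha0⟩ := hAne
    -- surjection ψ : Fin c → Fin k covering A
    set ψ : Fin c → Fin k := fun i =>
      if h : (i : ℕ) < A.card then A.orderEmbOfFin rfl ⟨i, h⟩ else a0 with hψ
    have hψsurj : ∀ i ∈ A, ∃ x : Fin c, ψ x = i := by
      intro i hi
      have : (i : Fin k) ∈ Set.range (A.orderEmbOfFin rfl) := by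
        rw [A.range_orderEmbOfFin rfl]; exact hi
      obtain ⟨y, hy⟩ := this
      refine ⟨⟨y, lt_of_lt_of_le y.2 hbc⟩, ?_⟩
      simp only [hψ]
      rw [dif_pos y.2]
      simpa using hy
    set M' : Fin c → Fin m → Bool := fun i x => M (ψ i) (j.succAbove x) with hM'
    set F : Finset (Fin (m+1)) → Finset (Fin m) :=
      fun s => univ.filter (fun x => j.succAbove x ∈ s) with hF
    have himg : ∀ s : Finset (Fin (m+1)), (F s).image j.succAbove = s.erase j := by
      intro s
      ext y
      simp only [hF, Finset.mem_image, Finset.mem_filter, Finset.mem_univ, true_and,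
        Finset.mem_erase]
      constructor
      · rintro ⟨x, hx, rfl⟩
        exact ⟨Fin.succAbove_ne j x, hx⟩
      · rintro ⟨hy, hys⟩
        obtain ⟨x, rfl⟩ := Fin.exists_succAbove_eq hy
        exact ⟨x, hys, rfl⟩
    have hmaps : ∀ s ∈ (((univ.powersetCard (d+1)).filter (fun s => ColsShattered M s)).filter
        (fun s => j ∈ s)), F s ∈ (univ.powersetCard d).filter (fun t => ColsShattered M' t) := by
      intro s hs
      simp only [Finset.mem_filter, Finset.mem_powersetCard_univ] at hs ⊢
      obtain ⟨⟨hcard, hsh⟩, hjs⟩ := hs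
      constructor
      · -- card
        have h1 : ((F s).image j.succAbove).card = (F s).card :=
          Finset.card_image_of_injective _ (Fin.succAbove_right_injective)
        rw [himg s, Finset.card_erase_of_mem hjs, hcard] at h1
        omega
      · -- shattered
        intro g
        set g' : Fin (m+1) → Bool := fun y =>
          if hy : ∃ x, j.succAbove x = y then g (Classical.choose hy) else b with hg'
        obtain ⟨i, hi⟩ := hsh g'
        have hij : M i j = b := by
          have h0 := hi j hjs
          rw [h0, hg']
          show (if hy : ∃ x, j.succAbove x = j then g (Classical.choose hy) else b) = b
          rw [dif_neg]
          rintro ⟨x, hx⟩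
          exact Fin.succAbove_ne j x hx
        obtain ⟨i', hi'⟩ := hψsurj i (by simp [hA, hij])
        refine ⟨i', fun x hx => ?_⟩
        simp only [hF, Finset.mem_filter] at hx
        have h2 := hi _ hx.2
        have h3 : g' (j.succAbove x) = g x := by
          rw [hg']
          show (if hy : ∃ y, j.succAbove y = j.succAbove x then g (Classical.choose hy) else b) = g x
          rw [dif_pos ⟨x, rfl⟩]
          congr 1
          exact Fin.succAbove_right_injective (Classical.choose_spec (⟨x, rfl⟩ : ∃ y, j.succAbove y = j.succAbove x))
        simp only [hM', hi']
        rw [h2, h3]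
    have hinj : Set.InjOn F (((univ.powersetCard (d+1)).filter (fun s => ColsShattered M s)).filter
        (fun s => j ∈ s)) := by
      intro s1 h1 s2 h2 heq
      simp only [Finset.coe_filter, Set.mem_setOf_eq] at h1 h2
      have e1 : s1 = insert j (s1.erase j) := (Finset.insert_erase h1.2).symm
      have e2 : s2 = insert j (s2.erase j) := (Finset.insert_erase h2.2).symm
      rw [e1, e2, ← himg s1, ← himg s2, heq]
    calc (((univ.powersetCard (d+1)).filter (fun s => ColsShattered M s)).filter
        (fun s => j ∈ s)).card
        ≤ ((univ.powersetCard d).filter (fun t => ColsShattered M' t)).card :=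
          Finset.card_le_card_of_injOn F hmaps hinj
      _ = shatteredCount d M' := by rw [shatteredCount]
      _ ≤ fMat m c d := Finset.le_sup (Finset.mem_univ M')
open Classical in
lemma double_count {N r : ℕ} (T : Finset (Finset (Fin N))) (hT : ∀ s ∈ T, s.card = r) :
    T.card * r = ∑ j : Fin N, (T.filter (fun s => j ∈ s)).card := by
  classical
  have h1 : ∀ j : Fin N, (T.filter (fun s => j ∈ s)).card = ∑ s ∈ T, if j ∈ s then 1 else 0 := by
    intro j; rw [Finset.card_filter]
  simp only [h1]
  rw [Finset.sum_comm, Finset.card_eq_sum_ones T, Finset.sum_mul, one_mul]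
  apply Finset.sum_congr rfl
  intro s hs
  rw [← hT s hs]
  simp [Finset.card_filter]

theorem stmt4 (n k d : ℕ) (hd : 1 ≤ d) (hk : 2 ^ (d + 1) ≤ k) (hn : d + 1 ≤ n) :
    (fMat n k (d + 1) : ℝ) ≤ ((n : ℝ) / (d + 1)) * (fMat (n - 1) (k / 2) d : ℝ) := by
  classical
  obtain ⟨m, rfl⟩ : ∃ m, n = m + 1 := ⟨n - 1, by omega⟩
  have hk4 : 4 ≤ k := le_trans (by
    calc (4:ℕ) = 2 ^ 2 := rfl
      _ ≤ 2 ^ (d+1) := Nat.pow_le_pow_right (by norm_num) (by omega)) hk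
  have hc : 0 < k / 2 := by omega
  -- main natural number inequality
  have hnat : fMat (m+1) k (d+1) * (d+1) ≤ (m+1) * fMat m (k/2) d := by
    obtain ⟨M, -, hM⟩ := Finset.exists_mem_eq_sup
      (Finset.univ : Finset (Fin k → Fin (m+1) → Bool))
      (Finset.univ_nonempty) (fun M => shatteredCount (d+1) M)
    rw [fMat, hM]
    -- per-matrix bound
    set T := (Finset.univ.powersetCard (d+1)).filter (fun s => ColsShattered M s) with hT
    have hcards : ∀ s ∈ T, s.card = d + 1 := by
      intro s hs
      simp only [hT, Finset.mem_filter, Finset.mem_powersetCard_univ] at hs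
      exact hs.1
    rw [shatteredCount, double_count T hcards]
    have hstep : ∀ j : Fin (m+1), (T.filter (fun s => j ∈ s)).card ≤ fMat m (k/2) d := by
      intro j
      apply key hc M j
      have hsum : ((univ : Finset (Fin k)).filter (fun i => M i j = true)).card
          + ((univ : Finset (Fin k)).filter (fun i => M i j = false)).card = k := by
        have h2 : (univ : Finset (Fin k)).filter (fun i => ¬ M i j = true)
            = (univ : Finset (Fin k)).filter (fun i => M i j = false) := by
          simp [Bool.not_eq_true]
        rw [← h2, Finset.card_filter_add_card_filter_not]
        simp
      by_cases hle : ((univ : Finset (Fin k)).filter (fun i => M i j = true)).card ≤ k / 2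
      · exact ⟨true, hle⟩
      · exact ⟨false, by omega⟩
    calc ∑ j : Fin (m+1), (T.filter (fun s => j ∈ s)).card
        ≤ ∑ _j : Fin (m+1), fMat m (k/2) d := Finset.sum_le_sum (fun j _ => hstep j)
      _ = (m+1) * fMat m (k/2) d := by simp [mul_comm]
  -- pass to reals
  have hm1 : ((m:ℕ)+1) - 1 = m := by omega
  rw [hm1, div_mul_eq_mul_div, le_div_iff₀ (by positivity)]
  exact_mod_cast hnat
end

section
/- Let (p_i)_{i=1}^{2^d−1} be a probability distribution (nonnegative reals summing to 1) with d ≥ 2. Then Σ_i p_i(1−p_i)^{d−1} ≤ ((2^d−2)/(2^d−1))^{d−1}. -/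
/-!
Tangent line trick. For `m + 1 = d - 1` and `c = 1 / (2 ^ d - 1)`, the function
`f x = x * (1 - x) ^ (m + 1)` lies below its tangent line at `c` on all of `[0, 1]`. Summing this
over the `2 ^ d - 1` points `p i`, whose mean is `c`, gives
`∑ f (p i) ≤ (2 ^ d - 1) * f c = (1 - c) ^ (m + 1)`.
For `x ≤ (m + 1) * c` the tangent bound follows from a second-order Taylor bound for `t ^ (m + 1)`
at `1 - c`; for larger `x` it follows from `(1 - x) ^ m ≤ (1 - c) ^ m` and a quadratic inequality.
-/

open Finset

theorem sum_le_card_mul_of_le_tangent {ι : Type*} [Fintype ι] (f : ℝ → ℝ) (p : ι → ℝ)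
    {a b c : ℝ} (hsum : ∑ i, p i = 1) (hc : Fintype.card ι * c = 1)
    (hf : ∀ i, f (p i) ≤ a + b * (p i - c)) :
    ∑ i, f (p i) ≤ Fintype.card ι * a := by
  calc ∑ i, f (p i) ≤ ∑ i, (a + b * (p i - c)) := sum_le_sum fun i _ => hf i
    _ = Fintype.card ι * a := by
      simp only [sum_add_distrib, ← mul_sum, sum_sub_distrib, hsum, sum_const, card_univ,
        nsmul_eq_mul, hc]
      ring

theorem pow_succ_le_quadratic_taylor (m : ℕ) {a b : ℝ} (ha₀ : 0 ≤ a) (ha₁ : a ≤ 1)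
    (hb₀ : 0 ≤ b) (hb₁ : b ≤ 1) :
    b ^ (m + 1) ≤ a ^ (m + 1) + (m + 1) * a ^ m * (b - a) + (m + 1) * m / 2 * (b - a) ^ 2 := by
  induction m with
  | zero => simp
  | succ m ih =>
    have hb_mul := mul_le_mul_of_nonneg_left ih hb₀
    have ham : a ^ m ≤ 1 := pow_le_one₀ ha₀ ha₁
    have hgap :
        0 ≤ ((m : ℝ) + 1) * ((b - a) ^ 2 * (1 - a ^ m) + m / 2 * ((b - a) ^ 2 * (1 - b))) := by
      have := sub_nonneg.2 ham
      have := sub_nonneg.2 hb₁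
      positivity
    push_cast
    linear_combination hb_mul + hgap

theorem mul_one_sub_pow_le_tangent (m : ℕ) {c x : ℝ} (hc : 0 ≤ c) (hc₁ : (m + 2) * c ≤ 1)
    (hc₂ : m * (m + 3) * c ≤ 2) (hx₀ : 0 ≤ x) (hx₁ : x ≤ 1) :
    x * (1 - x) ^ (m + 1) ≤
      c * (1 - c) ^ (m + 1) + (1 - c) ^ m * (1 - (m + 2) * c) * (x - c) := by
  have hc_le_one : c ≤ 1 := by nlinarith
  rcases le_total x ((m + 1) * c) with hx | hx
  · have hT := pow_succ_le_quadratic_taylor m (a := 1 - c) (b := 1 - x) (by linarith) (by linarith)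
      (by linarith) (by linarith)
    have hbern : 1 - m * c ≤ (1 - c) ^ m := by
      simpa [sub_eq_add_neg] using one_add_mul_le_pow (a := -c) (by linarith) m
    have hxm : x * (m / 2) ≤ (1 - c) ^ m := by nlinarith
    have hgap : 0 ≤ ((m : ℝ) + 1) * (c - x) ^ 2 * ((1 - c) ^ m - x * (m / 2)) := by
      have := sub_nonneg.2 hxm
      positivity
    linear_combination mul_le_mul_of_nonneg_left hT hx₀ + hgap
  · have hcx : c ≤ x := by nlinarith
    have hpow : (1 - x) ^ m ≤ (1 - c) ^ m := pow_le_pow_left₀ (by linarith) (by linarith) m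
    have hquad : 0 ≤ (x - c) * (x - (m + 1) * c) := mul_nonneg (by linarith) (by linarith)
    have h1 := mul_le_mul_of_nonneg_left hpow (mul_nonneg hx₀ (sub_nonneg.2 hx₁))
    have h2 := mul_le_mul_of_nonneg_left hquad (pow_nonneg (by linarith : (0 : ℝ) ≤ 1 - c) m)
    linear_combination h1 + h2

theorem mul_add_three_add_two_le_two_pow (m : ℕ) : m * (m + 3) + 2 ≤ 2 ^ (m + 3) := by
  induction m with
  | zero => norm_num
  | succ m ih =>
    have := Nat.lt_two_pow_self (n := m + 2)
    have h₃ : 2 ^ (m + 3) = 2 * 2 ^ (m + 2) := by ring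
    have h₄ : 2 ^ (m + 1 + 3) = 4 * 2 ^ (m + 2) := by ring
    nlinarith

theorem stmt5 (d : ℕ) (hd : 2 ≤ d) (p : Fin (2 ^ d - 1) → ℝ)
    (hpos : ∀ i, 0 ≤ p i) (hsum : ∑ i, p i = 1) :
    ∑ i, p i * (1 - p i) ^ (d - 1) ≤
      (((2 : ℝ) ^ d - 2) / ((2 : ℝ) ^ d - 1)) ^ (d - 1) := by
  obtain ⟨m, rfl⟩ : ∃ m, d = m + 2 := ⟨d - 2, by omega⟩
  rw [show m + 2 - 1 = m + 1 by omega]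
  have hN₁ : (m : ℝ) + 3 ≤ 2 ^ (m + 2) := by exact_mod_cast Nat.lt_two_pow_self
  have hN₂ : (m : ℝ) * (m + 3) + 2 ≤ 2 * 2 ^ (m + 2) := by
    exact_mod_cast (mul_add_three_add_two_le_two_pow m).trans_eq (pow_succ' 2 (m + 2))
  set N : ℝ := 2 ^ (m + 2) - 1 with hN
  have hN_pos : 0 < N := by linarith
  have hcard : Fintype.card (Fin (2 ^ (m + 2) - 1)) * N⁻¹ = 1 := by
    rw [Fintype.card_fin, Nat.cast_sub Nat.one_le_two_pow, Nat.cast_pow, Nat.cast_ofNat,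
      Nat.cast_one, mul_inv_cancel₀ hN_pos.ne']
  have hp_le_one (i) : p i ≤ 1 := hsum ▸ single_le_sum (fun j _ => hpos j) (mem_univ i)
  have htangent (i) := mul_one_sub_pow_le_tangent m (c := N⁻¹) (x := p i) (by positivity)
    (by rw [← div_eq_mul_inv, div_le_one hN_pos]; linarith)
    (by rw [← div_eq_mul_inv, div_le_iff₀ hN_pos]; linarith) (hpos i) (hp_le_one i)
  calc ∑ i, p i * (1 - p i) ^ (m + 1)
      ≤ Fintype.card (Fin (2 ^ (m + 2) - 1)) * (N⁻¹ * (1 - N⁻¹) ^ (m + 1)) :=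
        sum_le_card_mul_of_le_tangent (fun x => x * (1 - x) ^ (m + 1)) p hsum hcard htangent
    _ = ((2 ^ (m + 2) - 2) / N) ^ (m + 1) := by
        rw [← mul_assoc, hcard, one_mul, ← one_div, one_sub_div hN_pos.ne', hN]
        ring
end

section
/- More generally, for any integer m ≥ d ≥ 2 and nonnegative reals p_1,…,p_m summing to 1, Σ_{i=1}^m p_i(1−p_i)^{d−1} ≤ m·(1/m)·(1−1/m)^{d−1} = ((m−1)/m)^{d−1} provided m ≥ d, i.e., the function is maximized by the uniform distribution when m ≥ d. -/
/-!
Tangent line trick. With `y = 1 - p` and `k + 1 = d - 1`, the summand is `f y = y ^ (k + 1) * (1 - y)`,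
and the `y i` have mean `b = (m - 1) / m`. Since `m ≥ d` puts `b` at or beyond the maximum
`(k + 1) / (k + 2)` of `f`, the tangent to `f` at `b` lies above `f` on `[0, ∞)`; summing the
tangent values, the linear terms cancel and leave `m * f b = b ^ (k + 1)`.
-/

open Finset

theorem Finset.sum_le_card_mul_of_le_tangent {ι : Type*} (s : Finset ι) (f : ℝ → ℝ) (x : ι → ℝ)
    {b c : ℝ} (hf : ∀ i ∈ s, f (x i) ≤ f b + c * (x i - b)) (hx : ∑ i ∈ s, x i = #s * b) :
    ∑ i ∈ s, f (x i) ≤ #s * f b :=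
  calc ∑ i ∈ s, f (x i) ≤ ∑ i ∈ s, (f b + c * (x i - b)) := sum_le_sum hf
    _ = #s * f b := by
      rw [sum_add_distrib, ← mul_sum, sum_sub_distrib, hx]
      simp

theorem pow_succ_mul_one_sub_le_tangent {k : ℕ} {b y : ℝ} (hb : (k + 1 : ℝ) ≤ (k + 2) * b)
    (hy : 0 ≤ y) :
    y ^ (k + 1) * (1 - y) ≤
      b ^ (k + 1) * (1 - b) + ((k + 1) * b ^ k - (k + 2) * b ^ (k + 1)) * (y - b) := by
  induction k with
  | zero => norm_num; nlinarith [sq_nonneg (y - b)]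
  | succ k ih =>
    push_cast at hb ⊢
    have hb' : (k + 1 : ℝ) ≤ (k + 2) * b := by nlinarith
    -- the gap at exponent `k + 2` is `y` times the gap at `k + 1` plus a nonnegative square term
    have hgap := mul_nonneg hy (sub_nonneg.2 (ih hb'))
    have hsq : 0 ≤ (y - b) ^ 2 * b ^ k * ((k + 2) * b - (k + 1)) := by
      have : 0 ≤ b := by nlinarith
      have : 0 ≤ (k + 2) * b - (k + 1) := by linarith
      positivity
    linear_combination hgap + hsq

theorem stmt6 (d m : ℕ) (hd : 2 ≤ d) (hm : d ≤ m) (p : Fin m → ℝ)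
    (hpos : ∀ i, 0 ≤ p i) (hsum : ∑ i, p i = 1) :
    ∑ i, p i * (1 - p i) ^ (d - 1) ≤ (((m : ℝ) - 1) / (m : ℝ)) ^ (d - 1) := by
  obtain ⟨k, rfl⟩ : ∃ k, d = k + 2 := ⟨d - 2, by omega⟩
  rw [show k + 2 - 1 = k + 1 by omega]
  have hm0 : (0 : ℝ) < m := by exact_mod_cast (show 0 < m by omega)
  have hkm : (k : ℝ) + 2 ≤ m := by exact_mod_cast hm
  set b : ℝ := ((m : ℝ) - 1) / m
  have hmb : (m : ℝ) * (1 - b) = 1 := by simp only [b]; field_simp; ring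
  have hb : (k + 1 : ℝ) ≤ (k + 2) * b := by
    rw [← mul_div_assoc, le_div_iff₀ hm0]
    nlinarith
  have hp1 (i : Fin m) : p i ≤ 1 := hsum ▸ single_le_sum (fun j _ => hpos j) (mem_univ i)
  have hmean : ∑ i, (1 - p i) = #(univ : Finset (Fin m)) * b := by
    simp only [sum_sub_distrib, hsum, sum_const, card_univ, Fintype.card_fin, nsmul_eq_mul, mul_one]
    linear_combination hmb
  calc ∑ i, p i * (1 - p i) ^ (k + 1)
      = ∑ i, (1 - p i) ^ (k + 1) * (1 - (1 - p i)) := sum_congr rfl fun i _ => by ring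
    _ ≤ #(univ : Finset (Fin m)) * (b ^ (k + 1) * (1 - b)) :=
        sum_le_card_mul_of_le_tangent univ (fun y => y ^ (k + 1) * (1 - y)) (fun i => 1 - p i)
          (fun i _ => pow_succ_mul_one_sub_le_tangent hb (sub_nonneg.2 (hp1 i))) hmean
    _ = b ^ (k + 1) := by rw [card_univ, Fintype.card_fin, mul_left_comm, hmb, mul_one]
end

section
/- If a graph G on n vertices contains no clique of size w+1, then G is degree-majorized by some complete w-partite graph on n vertices; that is, there is a complete w-partite graph H on n vertices such that when the degree sequences of G and H are both sorted in decreasing order, each degree of G is at most the corresponding degree of H (Erdős's degree majorization). -/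
/-!
Induction on `w`. Let `x` be a vertex of maximum degree `Δ` and `N` its neighbourhood; `G[N]` has
no `w`-clique, so by induction it is degree-dominated, vertex by vertex along a permutation of `N`,
by a complete `(w-1)`-partite graph on `N`. Add `V \ N` as one more class. A vertex outside `N`
gets degree `|N| = Δ`, which bounds every degree of `G`; a vertex in `N` loses at most `|V \ N|`
neighbours when passing to `G[N]`, and the new class gives exactly `|V \ N|` back.
Domination along a bijection then gives domination of the sorted sequences, since for every `a`
at least as many vertices of the partite graph as of `G` have degree `≥ a`.
-/

open Finset

open Classical in
/-- The degree sequence of a graph on `Fin n`, sorted in decreasing order. -/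
noncomputable def sortedDegrees {n : ℕ} (G : SimpleGraph (Fin n)) : List ℕ :=
  ((List.ofFn fun v => G.degree v).mergeSort (fun a b => b ≤ a))

namespace List

variable {α : Type*} [LinearOrder α] {l : List α}

theorem SortedGE.lt_countP_getD_le (hl : l.SortedGE) {i : ℕ} (hi : i < l.length) (d : α) :
    i < l.countP (l.getD i d ≤ ·) := by
  have hprefix : (l.take (i + 1)).countP (l.getD i d ≤ ·) = i + 1 := by
    rw [countP_eq_length.mpr, length_take]
    · omega
    intro x hx
    obtain ⟨j, hj, rfl⟩ := mem_iff_getElem.mp hx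
    simp only [length_take] at hj
    rw [getD_eq_getElem _ _ hi, getElem_take, decide_eq_true_eq]
    exact hl.getElem_ge_getElem_of_le (by omega : j ≤ i)
  calc i < i + 1 := i.lt_succ_self
    _ = _ := hprefix.symm
    _ ≤ _ := (take_sublist _ _).countP_le

theorem SortedGE.le_getD_of_lt_countP (hl : l.SortedGE) {i : ℕ} {a : α}
    (hi : i < l.countP (a ≤ ·)) (d : α) : a ≤ l.getD i d := by
  have hil : i < l.length := hi.trans_le countP_le_length
  rw [getD_eq_getElem _ _ hil]
  by_contra! hlt
  have hsuffix : (l.drop i).countP (a ≤ ·) = 0 := by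
    rw [countP_eq_zero]
    intro x hx
    obtain ⟨j, hj, rfl⟩ := mem_iff_getElem.mp hx
    simp only [getElem_drop, decide_eq_true_eq, not_le]
    exact (hl.getElem_ge_getElem_of_le (by omega : i ≤ i + j)).trans_lt hlt
  have hprefix : (l.take i).countP (a ≤ ·) ≤ i :=
    countP_le_length.trans (length_take_le _ _)
  have hsplit := countP_append (p := (a ≤ ·)) (l₁ := l.take i) (l₂ := l.drop i)
  rw [take_append_drop, hsuffix] at hsplit
  omega

theorem getD_bot_le_getD_bot_of_countP_le [OrderBot α] {l₁ l₂ : List α} (h₁ : l₁.SortedGE)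
    (h₂ : l₂.SortedGE) (hcount : ∀ a, l₁.countP (a ≤ ·) ≤ l₂.countP (a ≤ ·)) (i : ℕ) :
    l₁.getD i ⊥ ≤ l₂.getD i ⊥ := by
  rcases lt_or_ge i l₁.length with hi | hi
  · exact h₂.le_getD_of_lt_countP ((h₁.lt_countP_getD_le hi ⊥).trans_le (hcount _)) ⊥
  · rw [getD_eq_default _ _ hi]
    exact bot_le

end List

open Classical in
noncomputable def extendColoring {V : Type*} {w : ℕ} (s : Set V) (c : s → Fin w) :
    V → Fin (w + 1) :=
  fun v => if h : v ∈ s then (c ⟨v, h⟩).succ else 0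

namespace SimpleGraph

theorem CliqueFree.induce_neighborSet {V : Type*} {G : SimpleGraph V} {n : ℕ}
    (hG : G.CliqueFree (n + 1)) (x : V) : (G.induce (G.neighborSet x)).CliqueFree n := by
  rw [cliqueFree_induce_iff, ← Set.univ_inter (G.neighborSet x)]
  exact (G.cliqueFreeOn_univ.mpr hG).of_succ _ (Set.mem_univ x)

variable {V : Type*} [Fintype V]

theorem degree_le_degree_induce_add (G : SimpleGraph V) [DecidableRel G.Adj] (s : Set V)
    [DecidablePred (· ∈ s)] {v : V} (hv : v ∈ s) :
    G.degree v ≤ (G.induce s).degree ⟨v, hv⟩ + #{u | u ∉ s} := by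
  classical
  rw [← card_neighborFinset_eq_degree, ← card_neighborFinset_eq_degree,
    ← card_map (.subtype (· ∈ s)), ← card_inter_add_card_sdiff _ s.toFinset]
  gcongr <;> intro u <;> simp +contextual

theorem degree_comap_top {W : Type*} [DecidableEq W] (c : V → W) (v : V)
    [Fintype (((⊤ : SimpleGraph W).comap c).neighborSet v)] :
    ((⊤ : SimpleGraph W).comap c).degree v = #{u | c u ≠ c v} := by
  rw [← card_neighborFinset_eq_degree]
  congr 1
  ext u
  simp [ne_comm]

section extendColoring

variable {w : ℕ} {s : Set V} [DecidablePred (· ∈ s)] (c : s → Fin w)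

theorem degree_comap_top_extendColoring_of_notMem {v : V} (hv : v ∉ s)
    [Fintype (((⊤ : SimpleGraph (Fin (w + 1))).comap (extendColoring s c)).neighborSet v)] :
    ((⊤ : SimpleGraph (Fin (w + 1))).comap (extendColoring s c)).degree v = #{u | u ∈ s} := by
  rw [degree_comap_top]
  congr 1
  ext u
  by_cases hu : u ∈ s <;> simp [extendColoring, hu, hv, Fin.succ_ne_zero]

theorem degree_comap_top_extendColoring (v : s)
    [Fintype (((⊤ : SimpleGraph (Fin (w + 1))).comap (extendColoring s c)).neighborSet v)]
    [Fintype (((⊤ : SimpleGraph (Fin w)).comap c).neighborSet v)] :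
    ((⊤ : SimpleGraph (Fin (w + 1))).comap (extendColoring s c)).degree v =
      #{u | u ∉ s} + ((⊤ : SimpleGraph (Fin w)).comap c).degree v := by
  classical
  have hsplit : ({u | extendColoring s c u ≠ extendColoring s c v} : Finset V) =
      ({u | u ∉ s} : Finset V) ∪ ({u | c u ≠ c v} : Finset s).map (.subtype _) := by
    ext u
    by_cases hu : u ∈ s <;> simp [extendColoring, hu, (Fin.succ_ne_zero _).symm]
  rw [degree_comap_top, degree_comap_top, hsplit, card_union_of_disjoint, card_map]
  simp +contextual [Finset.disjoint_left]

end extendColoring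

theorem CliqueFree.exists_degree_le_degree_comap_top {G : SimpleGraph V} [DecidableRel G.Adj]
    {w : ℕ} (hG : G.CliqueFree (w + 1)) :
    ∃ (c : V → Fin w) (π : Equiv.Perm V),
      ∀ v, G.degree v ≤ ((⊤ : SimpleGraph (Fin w)).comap c).degree (π v) := by
  induction w generalizing V with
  | zero =>
    have : IsEmpty V := cliqueFree_one.mp hG
    exact ⟨isEmptyElim, .refl V, isEmptyElim⟩
  | succ w ih =>
    rcases isEmpty_or_nonempty V with hV | hV
    · exact ⟨isEmptyElim, .refl V, isEmptyElim⟩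
    obtain ⟨x, hx⟩ := Finite.exists_max fun v => G.degree v
    obtain ⟨c, π, hπ⟩ := ih (hG.induce_neighborSet x)
    refine ⟨extendColoring _ c, π.subtypeCongr (.refl _), fun v => ?_⟩
    by_cases hv : v ∈ G.neighborSet x
    · rw [Equiv.Perm.subtypeCongr.left_apply π _ hv, degree_comap_top_extendColoring]
      have hrestrict := degree_le_degree_induce_add G _ hv
      have hinduction := hπ ⟨v, hv⟩
      omega
    · rw [Equiv.Perm.subtypeCongr.right_apply π _ hv, Equiv.refl_apply,
        degree_comap_top_extendColoring_of_notMem _ hv]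
      calc G.degree v ≤ G.degree x := hx v
        _ = #{u | u ∈ G.neighborSet x} := by
          rw [← card_neighborFinset_eq_degree]
          congr 1
          ext
          simp

end SimpleGraph

theorem sortedGE_sortedDegrees {n : ℕ} (G : SimpleGraph (Fin n)) : (sortedDegrees G).SortedGE :=
  List.sortedGE_mergeSort

open Classical in
theorem countP_sortedDegrees {n : ℕ} (G : SimpleGraph (Fin n)) (p : ℕ → Prop)
    [DecidablePred p] : (sortedDegrees G).countP (p ·) = #{v | p (G.degree v)} := by
  rw [sortedDegrees, (List.mergeSort_perm _ _).countP_eq, ← Multiset.coe_countP,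
    ← Fin.univ_val_map, Multiset.countP_map, card_def, filter_val]

/-- Erdős's degree majorization: if `G` on `n` vertices has no clique of size `w+1`,
then `G` is degree-majorized by some complete `w`-partite graph on `n` vertices. -/
theorem stmt8 (n w : ℕ) (G : SimpleGraph (Fin n))
    (hG : G.CliqueFree (w + 1)) :
    ∃ c : Fin n → Fin w,
      ∀ i : ℕ, (sortedDegrees G).getD i 0 ≤
        (sortedDegrees (SimpleGraph.mk (fun u v => c u ≠ c v) ⟨fun u v h => h.symm⟩
          ⟨fun u h => h rfl⟩)).getD i 0 := by
  classical
  obtain ⟨c, π, hπ⟩ := hG.exists_degree_le_degree_comap_top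
  refine ⟨c, List.getD_bot_le_getD_bot_of_countP_le (sortedGE_sortedDegrees G)
    (sortedGE_sortedDegrees _) fun a => ?_⟩
  rw [countP_sortedDegrees, countP_sortedDegrees]
  refine card_le_card_of_injOn π (fun v hv => ?_) π.injective.injOn
  simp only [coe_filter, mem_univ, true_and, Set.mem_ofPred_eq] at hv ⊢
  -- `comap c ⊤` is the graph of the statement; only the `Fintype` instances need `congr!`.
  exact hv.trans ((hπ v).trans_eq (by congr!))
end

section
/- Let V be a d'-dimensional 𝔽_2-vector space, S ⊆ V with |S| = k ≥ 2^d, and let p be the probability that a uniformly random linear map φ: V → 𝔽_2^d satisfies φ(S) = 𝔽_2^d. Then there exists a k × (2^{d'} − 1) binary matrix with exactly 2^{d·d'}·p/d! shattered k×d submatrices. -/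
/-!
Take the rows of `M` to be the points of `S` and the columns the nonzero functionals on `V`,
with entry `u v`. A linear map `φ : V → 𝔽₂^d` is the same as a `d`-tuple of functionals, and
`φ(S) = 𝔽₂^d` says exactly that these columns, in this order, are shattered. Shattered tuples
have distinct nonzero entries, so each shattered `d`-set of columns is counted `d!` times.
-/

open Finset

open Function

def TupleShattered {ι κ β : Type*} (M : ι → κ → β) {d : ℕ} (c : Fin d → κ) : Prop :=
  ∀ g : Fin d → β, ∃ i, ∀ j, M i (c j) = g j

namespace TupleShattered

variable {ι κ β : Type*} {d : ℕ}

theorem injective [Nontrivial β] {M : ι → κ → β} {c : Fin d → κ} (h : TupleShattered M c) :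
    Injective c := by
  intro j j' hjj'
  by_contra hne
  obtain ⟨b, b', hbb'⟩ := exists_pair_ne β
  obtain ⟨i, hi⟩ := h (update (fun _ => b) j' b')
  have hj := hi j
  have hj' := hi j'
  rw [update_of_ne hne] at hj
  rw [update_self, ← hjj', hj] at hj'
  exact hbb' hj'

theorem exists_ne [Nontrivial β] {M : ι → κ → β} {c : Fin d → κ} (h : TupleShattered M c)
    (j : Fin d) (b : β) : ∃ i, M i (c j) ≠ b := by
  obtain ⟨b', hb'⟩ := _root_.exists_ne b
  obtain ⟨i, hi⟩ := h fun _ => b'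
  exact ⟨i, (hi j).trans_ne hb'⟩

end TupleShattered

section
variable {ι ι' κ κ' β β' : Type*} {d : ℕ}

theorem tupleShattered_comp_iff (M : ι → κ → β) {σ : ι' → ι} (hσ : Surjective σ)
    {f : β → β'} (hf : Bijective f) (c : Fin d → κ) :
    TupleShattered (fun i x => f (M (σ i) x)) c ↔ TupleShattered M c := by
  constructor
  · intro h g
    obtain ⟨i, hi⟩ := h (f ∘ g)
    exact ⟨σ i, fun j => hf.1 (hi j)⟩
  · intro h g
    obtain ⟨i, hi⟩ := h fun j => surjInv hf.surjective (g j)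
    obtain ⟨i', rfl⟩ := hσ i
    exact ⟨i', fun j => show f (M (σ i') (c j)) = g j by rw [hi j, surjInv_eq hf.surjective]⟩

theorem natCard_tupleShattered_comp [Nontrivial β] (M : ι → κ → β) {τ : κ' → κ}
    (hτ : Injective τ) (hτ_range : ∀ x ∉ Set.range τ, ∃ b, ∀ i, M i x = b) :
    Nat.card {c : Fin d → κ' // TupleShattered (fun i x => M i (τ x)) c} =
      Nat.card {c : Fin d → κ // TupleShattered M c} := by
  refine Nat.card_eq_of_bijective (fun c => ⟨τ ∘ c.1, c.2⟩)
    ⟨fun c c' h => Subtype.ext (hτ.comp_left (congrArg Subtype.val h)), fun ⟨c, hc⟩ => ?_⟩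
  have hc_range : ∀ j, c j ∈ Set.range τ := fun j => by
    by_contra hj
    obtain ⟨b, hb⟩ := hτ_range _ hj
    obtain ⟨i, hi⟩ := hc.exists_ne j b
    exact hi (hb i)
  choose c' hc' using hc_range
  have hτc' : τ ∘ c' = c := funext hc'
  exact ⟨⟨c', show TupleShattered M (τ ∘ c') from hτc' ▸ hc⟩, Subtype.ext hτc'⟩

end

theorem tupleShattered_iff_colsShattered {k n d : ℕ} {M : Fin k → Fin n → Bool}
    {c : Fin d → Fin n} :
    TupleShattered M c ↔ Injective c ∧ ColsShattered M (univ.image c) := by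
  refine ⟨fun h => ⟨h.injective, fun g => ?_⟩, fun ⟨hc, h⟩ g => ?_⟩
  · obtain ⟨i, hi⟩ := h (g ∘ c)
    refine ⟨i, fun x hx => ?_⟩
    obtain ⟨j, -, rfl⟩ := mem_image.mp hx
    exact hi j
  · cases d with
    | zero =>
      obtain ⟨i, -⟩ := h fun _ => false
      exact ⟨i, fun j => j.elim0⟩
    | succ d =>
      obtain ⟨i, hi⟩ := h (g ∘ invFun c)
      exact ⟨i, fun j => by
        rw [hi _ (mem_image_of_mem c (mem_univ j)), comp_apply, leftInverse_invFun hc]⟩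

theorem injective_of_image_univ_eq {α : Type*} [DecidableEq α] {d : ℕ} {c : Fin d → α}
    {s : Finset α} (hc : univ.image c = s) (hs : #s = d) : Injective c := fun a b =>
  injOn_of_card_image_eq (by rw [hc, hs, card_univ, Fintype.card_fin]) (mem_coe.2 (mem_univ a))
    (mem_coe.2 (mem_univ b))

theorem natCard_image_univ_eq {α : Type*} [Fintype α] [DecidableEq α] {d : ℕ} {s : Finset α}
    (hs : #s = d) : Nat.card {c : Fin d → α // univ.image c = s} = d.factorial := by
  let e : {c : Fin d → α // univ.image c = s} ≃ (Fin d ↪ s) :=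
    { toFun := fun c => ⟨fun j => ⟨c.1 j, c.2.subset (mem_image_of_mem _ (mem_univ j))⟩,
        fun a b h => injective_of_image_univ_eq c.2 hs (congrArg Subtype.val h)⟩
      invFun := fun f => ⟨fun j => f j, by
        refine eq_of_subset_of_card_le (fun x hx => ?_) ?_
        · obtain ⟨j, -, rfl⟩ := mem_image.mp hx
          exact (f j).2
        · rw [card_image_of_injective univ (f := fun j => (f j : α))
            (Subtype.val_injective.comp f.injective), card_univ,
            Fintype.card_fin, hs]⟩
      left_inv := fun _ => rfl
      right_inv := fun _ => rfl }
  rw [Nat.card_congr e, Nat.card_eq_fintype_card, Fintype.card_embedding_eq, Fintype.card_fin,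
    Fintype.card_coe, hs, Nat.descFactorial_self]

theorem natCard_tupleShattered {k n : ℕ} (d : ℕ) (M : Fin k → Fin n → Bool) :
    Nat.card {c : Fin d → Fin n // TupleShattered M c} = shatteredCount d M * d.factorial := by
  classical
  have hmaps : ∀ c ∈ univ.filter (TupleShattered M),
      univ.image c ∈ (univ.powersetCard d).filter (ColsShattered M) := fun c hc => by
    obtain ⟨hinj, hsh⟩ := tupleShattered_iff_colsShattered.mp (mem_filter.mp hc).2
    refine mem_filter.mpr ⟨mem_powersetCard.mpr ⟨subset_univ _, ?_⟩, hsh⟩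
    rw [card_image_of_injective _ hinj, card_univ, Fintype.card_fin]
  have hfiber : ∀ s ∈ (univ.powersetCard d).filter (ColsShattered M),
      #((univ.filter (TupleShattered M)).filter fun c : Fin d → Fin n => univ.image c = s) =
        d.factorial := by
    intro s hs
    obtain ⟨hs_card, hs_sh⟩ := mem_filter.mp hs
    have hs_card := (mem_powersetCard.mp hs_card).2
    rw [filter_filter, ← natCard_image_univ_eq hs_card, Nat.card_eq_fintype_card,
      Fintype.card_subtype]
    congr 1
    refine filter_congr fun c _ => and_iff_right_of_imp fun hc => ?_
    exact tupleShattered_iff_colsShattered.mpr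
      ⟨injective_of_image_univ_eq hc hs_card, hc ▸ hs_sh⟩
  rw [Nat.card_eq_fintype_card, Fintype.card_subtype, card_eq_sum_card_fiberwise hmaps,
    sum_congr rfl hfiber, sum_const, smul_eq_mul]
  rfl

theorem natCard_linearMap_surjOn_eq_tupleShattered {K V : Type*} [CommSemiring K]
    [AddCommMonoid V] [Module K V] (S : Set V) (d : ℕ) :
    Nat.card {φ : V →ₗ[K] (Fin d → K) // ∀ y, ∃ v ∈ S, φ v = y} =
      Nat.card {u : Fin d → Module.Dual K V //
        TupleShattered (fun (v : S) (x : Module.Dual K V) => x v) u} := by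
  refine Nat.card_congr (Equiv.subtypeEquiv
    ⟨fun φ j => LinearMap.proj j ∘ₗ φ, LinearMap.pi, fun _ => rfl, fun _ => rfl⟩ fun φ => ?_)
  simp only [TupleShattered, Subtype.exists, exists_prop, funext_iff]
  rfl

theorem natCard_dual_ne_zero {K V : Type*} [Field K] [Finite K] [AddCommGroup V] [Module K V]
    [FiniteDimensional K V] :
    Nat.card {u : Module.Dual K V // u ≠ 0} = Nat.card K ^ Module.finrank K V - 1 := by
  classical
  have : Finite (Module.Dual K V) := Module.finite_of_finite K
  have := Fintype.ofFinite (Module.Dual K V)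
  rw [Nat.card_eq_fintype_card, Fintype.card_subtype_compl, Fintype.card_subtype_eq,
    ← Nat.card_eq_fintype_card, Module.natCard_eq_pow_finrank (K := K), Subspace.dual_finrank_eq]

theorem natCard_linearMap_surjOn_eq_shatteredCount_mul {V : Type*} [AddCommGroup V]
    [Module (ZMod 2) V] {S : Set V} {k n : ℕ} (row : Fin k ≃ S)
    (col : Fin n ≃ {u : Module.Dual (ZMod 2) V // u ≠ 0}) (d : ℕ) :
    Nat.card {φ : V →ₗ[ZMod 2] (Fin d → ZMod 2) // ∀ y, ∃ v ∈ S, φ v = y} =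
      shatteredCount d (fun i j => decide ((col j : Module.Dual (ZMod 2) V) (row i) = 1)) *
        d.factorial := by
  let pairing : S → Module.Dual (ZMod 2) V → ZMod 2 := fun v u => u v
  have hbool : Bijective fun x : ZMod 2 => decide (x = 1) := by decide
  have hcol_range : ∀ u ∉ Set.range fun j => (col j : Module.Dual (ZMod 2) V),
      ∃ b, ∀ v, pairing v u = b := fun u hu => by
    obtain rfl : u = 0 := by_contra fun h => hu ⟨col.symm ⟨u, h⟩, by simp⟩
    exact ⟨0, fun _ => rfl⟩
  calc _ = Nat.card {u : Fin d → Module.Dual (ZMod 2) V // TupleShattered pairing u} :=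
        natCard_linearMap_surjOn_eq_tupleShattered S d
    _ = Nat.card {c : Fin d → Fin n // TupleShattered (fun v j => pairing v (col j)) c} :=
        (natCard_tupleShattered_comp pairing (Subtype.val_injective.comp col.injective)
          hcol_range).symm
    _ = Nat.card {c : Fin d → Fin n //
          TupleShattered (fun i j => decide (pairing (row i) (col j) = 1)) c} :=
        Nat.card_congr (Equiv.subtypeEquivRight fun c =>
          (tupleShattered_comp_iff _ row.surjective hbool c).symm)
    _ = _ := natCard_tupleShattered d _

theorem stmt10_general (d d' k : ℕ)
    (V : Type) [AddCommGroup V] [Module (ZMod 2) V] [FiniteDimensional (ZMod 2) V]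
    (hdim : Module.finrank (ZMod 2) V = d')
    (S : Finset V) (hS : S.card = k)
    (p : ℝ)
    (hp : p = (Nat.card {φ : V →ₗ[ZMod 2] (Fin d → ZMod 2) //
        ∀ y : Fin d → ZMod 2, ∃ v ∈ S, φ v = y} : ℝ) / (2 : ℝ) ^ (d * d')) :
    ∃ M : Fin k → Fin (2 ^ d' - 1) → Bool,
      (shatteredCount d M : ℝ) = (2 : ℝ) ^ (d * d') * p / (d.factorial : ℝ) := by
  have : Finite (Module.Dual (ZMod 2) V) := Module.finite_of_finite (ZMod 2)
  have hcols : Nat.card {u : Module.Dual (ZMod 2) V // u ≠ 0} = 2 ^ d' - 1 := by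
    rw [natCard_dual_ne_zero, Nat.card_zmod, hdim]
  have hrows : Nat.card (S : Set V) = k := by simp [hS]
  let row := (Finite.equivFinOfCardEq hrows).symm
  let col := (Finite.equivFinOfCardEq hcols).symm
  refine ⟨fun i j => decide ((col j : Module.Dual (ZMod 2) V) (row i) = 1), ?_⟩
  have hcount := natCard_linearMap_surjOn_eq_shatteredCount_mul row col d
  simp only [mem_coe] at hcount
  rw [hp, hcount]
  field_simp
  push_cast
  ring

theorem stmt10 (d d' k : ℕ) (hk : 2 ^ d ≤ k)
    (V : Type) [AddCommGroup V] [Module (ZMod 2) V] [FiniteDimensional (ZMod 2) V]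
    (hdim : Module.finrank (ZMod 2) V = d')
    (S : Finset V) (hS : S.card = k)
    (p : ℝ)
    (hp : p = (Nat.card {φ : V →ₗ[ZMod 2] (Fin d → ZMod 2) //
        ∀ y : Fin d → ZMod 2, ∃ v ∈ S, φ v = y} : ℝ) / (2 : ℝ) ^ (d * d')) :
    ∃ M : Fin k → Fin (2 ^ d' - 1) → Bool,
      (shatteredCount d M : ℝ) = (2 : ℝ) ^ (d * d') * p / (d.factorial : ℝ) :=
  stmt10_general d d' k V hdim S hS p hp
end

section
/- Let V be a (d+1)-dimensional 𝔽_2-vector space, W ≤ V a (d−r)-dimensional subspace with 0 ≤ r ≤ d, and S = V \ W. The probability that a uniformly random linear map φ: V → 𝔽_2^d maps S onto all of 𝔽_2^d equals (2 − 2^{−r}) · Π_{i=0}^{d−1}(2^d − 2^i)/2^{d²}. -/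
open Finset

open Module

section aux

variable {V : Type} [AddCommGroup V] [Module (ZMod 2) V] [FiniteDimensional (ZMod 2) V]

lemma card_fiber (d : ℕ) (hdim : Module.finrank (ZMod 2) V = d + 1) (v : V) (hv : v ≠ 0) :
    Nat.card {φ : V →ₗ[ZMod 2] (Fin d → ZMod 2) // Function.Surjective φ ∧ φ v = 0} =
      ∏ i ∈ Finset.range d, (2 ^ d - 2 ^ i) := by
  set P := (fun _ : Fin d => ZMod 2) with hP
  set L : Submodule (ZMod 2) V := Submodule.span (ZMod 2) {v} with hL
  have hvL : v ∈ L := Submodule.mem_span_singleton_self v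
  have hLrank : finrank (ZMod 2) L = 1 := finrank_span_singleton hv
  have hQrank : finrank (ZMod 2) (V ⧸ L) = d := by
    have := Submodule.finrank_quotient_add_finrank L
    omega
  obtain ⟨e⟩ : Nonempty ((V ⧸ L) ≃ₗ[ZMod 2] (∀ i, P i)) := by
    apply FiniteDimensional.nonempty_linearEquiv_of_finrank_eq
    rw [hQrank, Module.finrank_fintype_fun_eq_card, Fintype.card_fin]
  have hle : ∀ (φ : V →ₗ[ZMod 2] (∀ i, P i)), φ v = 0 → L ≤ LinearMap.ker φ := by
    intro φ h
    rw [hL, Submodule.span_le, Set.singleton_subset_iff]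
    exact h
  have hmkv : L.mkQ v = 0 := (Submodule.Quotient.mk_eq_zero L).mpr hvL
  let E1 : {φ : V →ₗ[ZMod 2] (∀ i, P i) // Function.Surjective φ ∧ φ v = 0} ≃
      {ψ : (V ⧸ L) →ₗ[ZMod 2] (∀ i, P i) // Function.Surjective ψ} :=
    { toFun := fun φ => ⟨L.liftQ φ.1 (hle φ.1 φ.2.2), by
        have h : (L.liftQ φ.1 (hle φ.1 φ.2.2)).comp L.mkQ = φ.1 := Submodule.liftQ_mkQ _ _ _
        intro y
        obtain ⟨x, hx⟩ := φ.2.1 y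
        exact ⟨L.mkQ x, (LinearMap.congr_fun h x).trans hx⟩⟩
      invFun := fun ψ => ⟨ψ.1.comp L.mkQ, ψ.2.comp L.mkQ_surjective, by
        show ψ.1 (L.mkQ v) = 0
        rw [hmkv, map_zero]⟩
      left_inv := fun φ => Subtype.ext (Submodule.liftQ_mkQ _ _ _)
      right_inv := fun ψ => Subtype.ext (by
        apply Submodule.linearMap_qext
        exact Submodule.liftQ_mkQ _ _ _) }
  let E2 : {ψ : (V ⧸ L) →ₗ[ZMod 2] (∀ i, P i) // Function.Surjective ψ} ≃
      {f : (∀ i, P i) →ₗ[ZMod 2] (∀ i, P i) // Function.Surjective f} :=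
    { toFun := fun ψ => ⟨ψ.1.comp (e.symm : (∀ i, P i) →ₗ[ZMod 2] (V ⧸ L)),
        ψ.2.comp e.symm.surjective⟩
      invFun := fun f => ⟨f.1.comp (e : (V ⧸ L) →ₗ[ZMod 2] (∀ i, P i)), f.2.comp e.surjective⟩
      left_inv := fun ψ => Subtype.ext (by ext x; simp)
      right_inv := fun f => Subtype.ext (by ext x; simp) }
  let E3 : {f : (∀ i, P i) →ₗ[ZMod 2] (∀ i, P i) // Function.Surjective f} ≃
      ((∀ i, P i) ≃ₗ[ZMod 2] (∀ i, P i)) :=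
    { toFun := fun f => LinearEquiv.ofBijective f.1
        ⟨LinearMap.injective_iff_surjective.mpr f.2, f.2⟩
      invFun := fun g => ⟨g, g.surjective⟩
      left_inv := fun f => Subtype.ext rfl
      right_inv := fun g => by ext x; rfl }
  let E4 : ((∀ i, P i) ≃ₗ[ZMod 2] (∀ i, P i)) ≃ (GL (Fin d) (ZMod 2)) :=
    ((LinearMap.GeneralLinearGroup.generalLinearEquiv (ZMod 2) (∀ i, P i)).symm.toEquiv.trans
      (Units.mapEquiv (LinearMap.toMatrixAlgEquiv' :
        ((∀ i, P i) →ₗ[ZMod 2] (∀ i, P i)) ≃ₐ[ZMod 2] Matrix (Fin d) (Fin d) (ZMod 2)).toMulEquiv).toEquiv)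
  rw [Nat.card_congr (((E1.trans E2).trans E3).trans E4), Matrix.card_GL_field, ZMod.card,
    ← Finset.prod_range fun i => (2 ^ d - 2 ^ i)]

end aux

section aux2

variable {V : Type} [AddCommGroup V] [Module (ZMod 2) V] [FiniteDimensional (ZMod 2) V]

lemma ker_unique (d : ℕ) (hdim : Module.finrank (ZMod 2) V = d + 1)
    (φ : V →ₗ[ZMod 2] (Fin d → ZMod 2)) (hs : Function.Surjective φ)
    {v v' : V} (hv : v ≠ 0) (hv' : v' ≠ 0) (h : φ v = 0) (h' : φ v' = 0) : v = v' := by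
  have hker : finrank (ZMod 2) (LinearMap.ker φ) = 1 := by
    have h1 := LinearMap.finrank_range_add_finrank_ker φ
    have h2 : LinearMap.range φ = ⊤ := LinearMap.range_eq_top.mpr hs
    rw [h2, finrank_top, Module.finrank_fintype_fun_eq_card, Fintype.card_fin, hdim] at h1
    omega
  have hspan : Submodule.span (ZMod 2) {v} = LinearMap.ker φ := by
    apply Submodule.eq_of_le_of_finrank_eq
    · rw [Submodule.span_le, Set.singleton_subset_iff]; exact h
    · rw [finrank_span_singleton hv, hker]
  have : v' ∈ Submodule.span (ZMod 2) {v} := by rw [hspan]; exact h'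
  obtain ⟨c, rfl⟩ := Submodule.mem_span_singleton.mp this
  have hc : c = 1 := by
    rcases (by decide : ∀ c : ZMod 2, c = 0 ∨ c = 1) c with rfl | rfl
    · simp at hv'
    · rfl
  rw [hc, one_smul]

end aux2

theorem main (d r : ℕ) (hr : r ≤ d)
    (V : Type) [AddCommGroup V] [Module (ZMod 2) V] [FiniteDimensional (ZMod 2) V]
    (hdim : Module.finrank (ZMod 2) V = d + 1)
    (W : Submodule (ZMod 2) V) (hW : Module.finrank (ZMod 2) W = d - r) :
    Nat.card {φ : V →ₗ[ZMod 2] (Fin d → ZMod 2) //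
        ∀ y : Fin d → ZMod 2, ∃ v ∉ W, φ v = y} =
      (2 ^ (d + 1) - 2 ^ (d - r)) * ∏ i ∈ Finset.range d, (2 ^ d - 2 ^ i) := by
  classical
  have hfinV : Finite V := Module.finite_of_finite (ZMod 2)
  have hchar : ∀ φ : V →ₗ[ZMod 2] (Fin d → ZMod 2),
      (∀ y : Fin d → ZMod 2, ∃ v ∉ W, φ v = y) ↔
        (Function.Surjective φ ∧ ∃ v, v ∉ W ∧ φ v = 0) := by
    intro φ
    constructor
    · intro h
      refine ⟨fun y => ?_, ?_⟩
      · obtain ⟨v, _, hv⟩ := h y; exact ⟨v, hv⟩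
      · obtain ⟨v, hv, hv0⟩ := h 0; exact ⟨v, hv, hv0⟩
    · rintro ⟨hs, v0, hv0, h0⟩ y
      obtain ⟨u, hu⟩ := hs y
      by_cases huW : u ∈ W
      · refine ⟨u + v0, fun hmem => hv0 ?_, by rw [map_add, h0, hu, add_zero]⟩
        have : (u + v0) - u ∈ W := W.sub_mem hmem huW
        simpa using this
      · exact ⟨u, huW, hu⟩
  -- sigma decomposition
  let Fib : {v : V // v ∉ W} → Type := fun v =>
    {φ : V →ₗ[ZMod 2] (Fin d → ZMod 2) // Function.Surjective φ ∧ φ v.1 = 0}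
  have hnz : ∀ v : {v : V // v ∉ W}, v.1 ≠ 0 := fun v h => v.2 (h ▸ W.zero_mem)
  let E : {φ : V →ₗ[ZMod 2] (Fin d → ZMod 2) // ∀ y : Fin d → ZMod 2, ∃ v ∉ W, φ v = y} ≃
      Σ v : {v : V // v ∉ W}, Fib v :=
    { toFun := fun φ =>
        ⟨⟨Classical.choose ((hchar φ.1).mp φ.2).2, (Classical.choose_spec ((hchar φ.1).mp φ.2).2).1⟩,
          ⟨φ.1, ((hchar φ.1).mp φ.2).1, (Classical.choose_spec ((hchar φ.1).mp φ.2).2).2⟩⟩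
      invFun := fun x => ⟨x.2.1, (hchar x.2.1).mpr ⟨x.2.2.1, x.1.1, x.1.2, x.2.2.2⟩⟩
      left_inv := fun φ => Subtype.ext rfl
      right_inv := fun x => by
        have hgood : ∀ y : Fin d → ZMod 2, ∃ v ∉ W, x.2.1 v = y :=
          (hchar x.2.1).mpr ⟨x.2.2.1, x.1.1, x.1.2, x.2.2.2⟩
        refine Sigma.subtype_ext (Subtype.ext ?_) rfl
        exact ker_unique d hdim x.2.1 x.2.2.1
          (hnz ⟨_, (Classical.choose_spec ((hchar x.2.1).mp hgood).2).1⟩) (hnz x.1)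
          (Classical.choose_spec ((hchar x.2.1).mp hgood).2).2 x.2.2.2 }
  rw [Nat.card_congr E]
  have : ∀ v : {v : V // v ∉ W}, Nat.card (Fib v) =
      ∏ i ∈ Finset.range d, (2 ^ d - 2 ^ i) :=
    fun v => card_fiber d hdim v.1 (hnz v)
  have hfinL : Finite (V →ₗ[ZMod 2] (Fin d → ZMod 2)) :=
    Finite.of_injective _ DFunLike.coe_injective
  have hfib : ∀ v, Finite (Fib v) := fun v => by unfold Fib; infer_instance
  have : Nat.card (Σ v : {v : V // v ∉ W}, Fib v) =
      Nat.card {v : V // v ∉ W} * ∏ i ∈ Finset.range d, (2 ^ d - 2 ^ i) := by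
    have := Fintype.ofFinite {v : V // v ∉ W}
    have := fun v => Fintype.ofFinite (Fib v)
    have := Fintype.ofFinite V
    rw [Nat.card_eq_fintype_card, Fintype.card_sigma, Nat.card_eq_fintype_card]
    rw [Finset.sum_congr rfl (fun v _ => by
      rw [← Nat.card_eq_fintype_card, ‹∀ v : {v : V // v ∉ W}, Nat.card (Fib v) = _› v])]
    rw [Finset.sum_const, Finset.card_univ, smul_eq_mul]
  rw [this]
  congr 1
  -- cardinality of the complement of W
  have := Fintype.ofFinite V
  rw [Nat.card_eq_fintype_card]
  have hcV : Fintype.card V = 2 ^ (d + 1) := by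
    rw [card_eq_pow_finrank (K := ZMod 2) (V := V), ZMod.card, hdim]
  have hcW : Fintype.card {x : V // x ∈ W} = 2 ^ (d - r) := by
    rw [card_eq_pow_finrank (K := ZMod 2) (V := {x : V // x ∈ W}), ZMod.card]
    congr 1
  rw [Fintype.card_subtype_compl, hcV, hcW]

/-- If `V` is a `(d+1)`-dimensional `𝔽₂`-vector space, `W ≤ V` has dimension `d - r`
with `0 ≤ r ≤ d`, and `S = V \ W`, then the probability that a uniformly random linear
map `φ : V → 𝔽₂^d` satisfies `φ(S) = 𝔽₂^d` equals
`(2 - 2^{-r}) · ∏_{i=0}^{d-1}(2^d - 2^i) / 2^{d²}`. -/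
theorem stmt11 (d r : ℕ) (hr : r ≤ d)
    (V : Type) [AddCommGroup V] [Module (ZMod 2) V] [FiniteDimensional (ZMod 2) V]
    (hdim : Module.finrank (ZMod 2) V = d + 1)
    (W : Submodule (ZMod 2) V) (hW : Module.finrank (ZMod 2) W = d - r) :
    (Nat.card {φ : V →ₗ[ZMod 2] (Fin d → ZMod 2) //
        ∀ y : Fin d → ZMod 2, ∃ v ∉ W, φ v = y} : ℝ) / (2 : ℝ) ^ (d * (d + 1)) =
      (2 - (2 : ℝ) ^ (-(r : ℤ))) *
        (∏ i ∈ Finset.range d, ((2 : ℝ) ^ d - (2 : ℝ) ^ i)) / (2 : ℝ) ^ (d ^ 2) := by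
  rw [main d r hr V hdim W hW]
  have hcast : ((((2:ℕ) ^ (d + 1) - 2 ^ (d - r)) * ∏ i ∈ Finset.range d, (2 ^ d - 2 ^ i) : ℕ) : ℝ)
      = ((2:ℝ) ^ (d + 1) - 2 ^ (d - r)) * ∏ i ∈ Finset.range d, ((2:ℝ) ^ d - 2 ^ i) := by
    rw [Nat.cast_mul, Nat.cast_sub (Nat.pow_le_pow_right (by norm_num) (by omega)),
      Nat.cast_prod]
    push_cast
    refine congrArg _ (Finset.prod_congr rfl fun i hi => ?_)
    rw [Nat.cast_sub (Nat.pow_le_pow_right (by norm_num) (Finset.mem_range.mp hi).le)]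
    push_cast
    ring
  rw [hcast]
  have e2 : (2:ℝ)^d = 2^(d-r) * 2^r := by rw [← pow_add]; congr 1; omega
  have e3 : (2:ℝ)^(d*(d+1)) = 2^(d^2) * 2^d := by rw [← pow_add]; congr 1; ring
  have e4 : (2:ℝ)^(-(r:ℤ)) = ((2:ℝ)^r)⁻¹ := by rw [zpow_neg, zpow_natCast]
  rw [e3, e4, pow_succ]
  field_simp
  rw [e2]
  ring
end

section
/- For integers d ≥ 1, k_1, k_2 ≥ 2^d, and n_1, n_2 ≥ d: (n_1 n_2)^d − d!·f(n_1 n_2, k_1+k_2, d) ≤ (n_1^d − d!·f(n_1,k_1,d)) · (n_2^d − d!·f(n_2,k_2,d)). -/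
open Finset

open Classical

/-- good tuples: injective tuples of columns whose image is shattered. -/
noncomputable def goodT {k n : ℕ} (d : ℕ) (M : Fin k → Fin n → Bool) :
    Finset (Fin d → Fin n) :=
  Finset.univ.filter (fun t => Function.Injective t ∧
    ColsShattered M (Finset.image t Finset.univ))

lemma toEquiv_aux {n d : ℕ} {s : Finset (Fin n)} (hcard : Fintype.card {x // x ∈ s} = d)
    (t : Fin d → Fin n) (hinj : Function.Injective t)
    (himg : Finset.image t Finset.univ = s) :
    Function.Bijective (fun a => (⟨t a,
      himg ▸ Finset.mem_image_of_mem t (Finset.mem_univ a)⟩ : {x // x ∈ s})) := by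
  rw [Fintype.bijective_iff_injective_and_card]
  exact ⟨fun a b hab => hinj (congrArg Subtype.val hab), by simp [hcard]⟩

lemma fiber_card {k n d : ℕ} (M : Fin k → Fin n → Bool) (s : Finset (Fin n))
    (hsc : s.card = d) (hsh : ColsShattered M s) :
    ((goodT d M).filter (fun t => Finset.image t Finset.univ = s)).card = d.factorial := by
  classical
  have hcard : Fintype.card {x // x ∈ s} = d := by simp [hsc]
  have key : ((goodT d M).filter (fun t => Finset.image t Finset.univ = s)).card
      = (Finset.univ : Finset (Fin d ≃ {x // x ∈ s})).card := by
    refine Finset.card_bij'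
      (fun t ht => Equiv.ofBijective _ (toEquiv_aux hcard t
        (Finset.mem_filter.mp ((Finset.mem_filter.mp ht).1)).2.1
        (Finset.mem_filter.mp ht).2))
      (fun e _ => fun a => (e a : Fin n))
      (fun t ht => Finset.mem_univ _) ?_ (fun t ht => rfl)
      (fun e he => Equiv.ext fun a => Subtype.ext rfl)
    intro e he
    have himg : Finset.image (fun a => ((e a : Fin n))) Finset.univ = s := by
      ext x
      simp only [Finset.mem_image, Finset.mem_univ, true_and]
      constructor
      · rintro ⟨a, rfl⟩; exact (e a).2
      · intro hx; exact ⟨e.symm ⟨x, hx⟩, by simp⟩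
    refine Finset.mem_filter.mpr ⟨Finset.mem_filter.mpr ⟨Finset.mem_univ _, ?_, ?_⟩, himg⟩
    · exact Subtype.val_injective.comp e.injective
    · rw [himg]; exact hsh
  rw [key, Finset.card_univ, Fintype.card_equiv (Finset.equivFinOfCardEq hsc).symm,
    Fintype.card_fin]

lemma card_goodT {k n : ℕ} (d : ℕ) (M : Fin k → Fin n → Bool) :
    (goodT d M).card = d.factorial * shatteredCount d M := by
  classical
  rw [Finset.card_eq_sum_card_fiberwise (f := fun t => Finset.image t Finset.univ)
    (t := (Finset.univ.powersetCard d).filter (fun s => ColsShattered M s))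
    (fun t ht => by
      obtain ⟨-, hinj, hsh⟩ := Finset.mem_filter.mp ht
      refine Finset.mem_filter.mpr ⟨Finset.mem_powersetCard_univ.mpr ?_, hsh⟩
      rw [Finset.card_image_of_injective _ hinj, Finset.card_univ, Fintype.card_fin])]
  rw [Finset.sum_congr rfl (fun s hs => ?_), Finset.sum_const, smul_eq_mul, mul_comm,
    shatteredCount]
  obtain ⟨hs1, hs2⟩ := Finset.mem_filter.mp hs
  exact fiber_card M s (Finset.mem_powersetCard_univ.mp hs1) hs2

/-- bad tuples -/
noncomputable def badT {k n : ℕ} (d : ℕ) (M : Fin k → Fin n → Bool) :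
    Finset (Fin d → Fin n) := Finset.univ \ goodT d M

lemma card_badT_int {k n : ℕ} (d : ℕ) (M : Fin k → Fin n → Bool) :
    ((badT d M).card : ℤ) = (n : ℤ) ^ d - (d.factorial : ℤ) * (shatteredCount d M : ℤ) := by
  have h1 : (badT d M).card = (Finset.univ : Finset (Fin d → Fin n)).card - (goodT d M).card :=
    Finset.card_sdiff_of_subset (Finset.subset_univ _)
  have h2 : (goodT d M).card ≤ (Finset.univ : Finset (Fin d → Fin n)).card :=
    Finset.card_le_card (Finset.subset_univ _)
  have h3 : (Finset.univ : Finset (Fin d → Fin n)).card = n ^ d := by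
    rw [Finset.card_univ, Fintype.card_fun]; simp
  rw [h1, Nat.cast_sub h2, h3, card_goodT]
  push_cast
  ring

/-- the stacked matrix -/
def prodM {k₁ k₂ n₁ n₂ : ℕ} (M₁ : Fin k₁ → Fin n₁ → Bool) (M₂ : Fin k₂ → Fin n₂ → Bool) :
    Fin (k₁ + k₂) → Fin (n₁ * n₂) → Bool :=
  fun i c => Fin.addCases (fun i₁ => M₁ i₁ (finProdFinEquiv.symm c).1)
    (fun i₂ => M₂ i₂ (finProdFinEquiv.symm c).2) i

lemma good_of_fst {k₁ k₂ n₁ n₂ d : ℕ} (M₁ : Fin k₁ → Fin n₁ → Bool)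
    (M₂ : Fin k₂ → Fin n₂ → Bool) (t : Fin d → Fin (n₁ * n₂))
    (h : (fun a => (finProdFinEquiv.symm (t a)).1) ∈ goodT d M₁) :
    t ∈ goodT d (prodM M₁ M₂) := by
  classical
  set p : Fin d → Fin n₁ := fun a => (finProdFinEquiv.symm (t a)).1 with hp
  obtain ⟨-, hinj, hsh⟩ := Finset.mem_filter.mp h
  refine Finset.mem_filter.mpr ⟨Finset.mem_univ _, ?_, ?_⟩
  · intro a b hab
    exact hinj (by simp only [hp, hab])
  · intro g
    set g₁ : Fin n₁ → Bool := fun j =>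
      if h : ∃ a, p a = j then g (t h.choose) else false with hg₁
    obtain ⟨i₁, hi₁⟩ := hsh g₁
    refine ⟨Fin.castAdd k₂ i₁, ?_⟩
    intro j hj
    obtain ⟨a, -, rfl⟩ := Finset.mem_image.mp hj
    have h1 : prodM M₁ M₂ (Fin.castAdd k₂ i₁) (t a) = M₁ i₁ (p a) := by
      simp [prodM, Fin.addCases_left, hp]
    rw [h1, hi₁ (p a) (Finset.mem_image_of_mem p (Finset.mem_univ a))]
    have hex : ∃ b, p b = p a := ⟨a, rfl⟩
    have hch : hex.choose = a := hinj hex.choose_spec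
    simp only [hg₁, dif_pos hex, hch]

lemma good_of_snd {k₁ k₂ n₁ n₂ d : ℕ} (M₁ : Fin k₁ → Fin n₁ → Bool)
    (M₂ : Fin k₂ → Fin n₂ → Bool) (t : Fin d → Fin (n₁ * n₂))
    (h : (fun a => (finProdFinEquiv.symm (t a)).2) ∈ goodT d M₂) :
    t ∈ goodT d (prodM M₁ M₂) := by
  classical
  set p : Fin d → Fin n₂ := fun a => (finProdFinEquiv.symm (t a)).2 with hp
  obtain ⟨-, hinj, hsh⟩ := Finset.mem_filter.mp h
  refine Finset.mem_filter.mpr ⟨Finset.mem_univ _, ?_, ?_⟩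
  · intro a b hab
    exact hinj (by simp only [hp, hab])
  · intro g
    set g₂ : Fin n₂ → Bool := fun j =>
      if h : ∃ a, p a = j then g (t h.choose) else false with hg₂
    obtain ⟨i₂, hi₂⟩ := hsh g₂
    refine ⟨Fin.natAdd k₁ i₂, ?_⟩
    intro j hj
    obtain ⟨a, -, rfl⟩ := Finset.mem_image.mp hj
    have h1 : prodM M₁ M₂ (Fin.natAdd k₁ i₂) (t a) = M₂ i₂ (p a) := by
      simp [prodM, Fin.addCases_right, hp]
    rw [h1, hi₂ (p a) (Finset.mem_image_of_mem p (Finset.mem_univ a))]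
    have hex : ∃ b, p b = p a := ⟨a, rfl⟩
    have hch : hex.choose = a := hinj hex.choose_spec
    simp only [hg₂, dif_pos hex, hch]

lemma bad_card_le {k₁ k₂ n₁ n₂ d : ℕ} (M₁ : Fin k₁ → Fin n₁ → Bool)
    (M₂ : Fin k₂ → Fin n₂ → Bool) :
    (badT d (prodM M₁ M₂)).card ≤ (badT d M₁).card * (badT d M₂).card := by
  classical
  rw [← Finset.card_product]
  apply Finset.card_le_card_of_injOn
    (fun t => (fun a => (finProdFinEquiv.symm (t a)).1, fun a => (finProdFinEquiv.symm (t a)).2))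
  · intro t ht
    obtain ⟨-, hbad⟩ := Finset.mem_sdiff.mp ht
    refine Finset.mem_product.mpr ⟨?_, ?_⟩
    · refine Finset.mem_sdiff.mpr ⟨Finset.mem_univ _, fun hg => hbad ?_⟩
      exact good_of_fst M₁ M₂ t hg
    · refine Finset.mem_sdiff.mpr ⟨Finset.mem_univ _, fun hg => hbad ?_⟩
      exact good_of_snd M₁ M₂ t hg
  · intro t ht t' ht' heq
    funext a
    have h1 : (finProdFinEquiv.symm (t a)).1 = (finProdFinEquiv.symm (t' a)).1 :=
      congrFun (congrArg Prod.fst heq) a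
    have h2 : (finProdFinEquiv.symm (t a)).2 = (finProdFinEquiv.symm (t' a)).2 :=
      congrFun (congrArg Prod.snd heq) a
    have : finProdFinEquiv.symm (t a) = finProdFinEquiv.symm (t' a) := Prod.ext h1 h2
    exact finProdFinEquiv.symm.injective this

theorem stmt12 (d k₁ k₂ n₁ n₂ : ℕ) (hd : 1 ≤ d) (hk₁ : 2 ^ d ≤ k₁) (hk₂ : 2 ^ d ≤ k₂)
    (hn₁ : d ≤ n₁) (hn₂ : d ≤ n₂) :
    ((n₁ * n₂ : ℕ) : ℤ) ^ d - (d.factorial : ℤ) * (fMat (n₁ * n₂) (k₁ + k₂) d : ℤ) ≤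
      ((n₁ : ℤ) ^ d - (d.factorial : ℤ) * (fMat n₁ k₁ d : ℤ)) *
        ((n₂ : ℤ) ^ d - (d.factorial : ℤ) * (fMat n₂ k₂ d : ℤ)) := by
  classical
  obtain ⟨M₁, -, hM₁⟩ := Finset.exists_mem_eq_sup
    (Finset.univ : Finset (Fin k₁ → Fin n₁ → Bool)) Finset.univ_nonempty
    (fun M => shatteredCount d M)
  obtain ⟨M₂, -, hM₂⟩ := Finset.exists_mem_eq_sup
    (Finset.univ : Finset (Fin k₂ → Fin n₂ → Bool)) Finset.univ_nonempty
    (fun M => shatteredCount d M)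
  have hf : (shatteredCount d (prodM M₁ M₂) : ℤ) ≤ (fMat (n₁ * n₂) (k₁ + k₂) d : ℤ) := by
    exact_mod_cast Finset.le_sup (f := fun M => shatteredCount d M) (Finset.mem_univ _)
  calc ((n₁ * n₂ : ℕ) : ℤ) ^ d - (d.factorial : ℤ) * (fMat (n₁ * n₂) (k₁ + k₂) d : ℤ)
      ≤ ((n₁ * n₂ : ℕ) : ℤ) ^ d - (d.factorial : ℤ) * (shatteredCount d (prodM M₁ M₂) : ℤ) := by
        have : (0:ℤ) ≤ (d.factorial : ℤ) := by positivity
        nlinarith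
    _ = ((badT d (prodM M₁ M₂)).card : ℤ) := (card_badT_int d (prodM M₁ M₂)).symm
    _ ≤ ((badT d M₁).card : ℤ) * ((badT d M₂).card : ℤ) := by
        exact_mod_cast bad_card_le M₁ M₂
    _ = ((n₁ : ℤ) ^ d - (d.factorial : ℤ) * (fMat n₁ k₁ d : ℤ)) *
        ((n₂ : ℤ) ^ d - (d.factorial : ℤ) * (fMat n₂ k₂ d : ℤ)) := by
        rw [card_badT_int, card_badT_int, ← hM₁, ← hM₂]; rfl
end

section
/- Suppose nonnegative reals (x_v) summing to 1 maximize the Lagrangian polynomial of a d-uniform hypergraph H, and among all maximizers (x_v) has support of minimum size. Then every pair of distinct vertices u, v in the support of (x_v) is contained together in some edge of H. -/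
open Finset

open Classical in
/-- If `x` maximizes the Lagrangian polynomial of a `d`-uniform hypergraph `H` over
the simplex and has support of minimum size among all maximizers, then every pair of
distinct vertices in the support of `x` lies in a common edge of `H`. -/
theorem stmt19 {α : Type} [Fintype α] (d : ℕ) (H : Finset (Finset α))
    (hunif : ∀ e ∈ H, e.card = d)
    (x : α → ℝ) (hx0 : ∀ v, 0 ≤ x v) (hx1 : ∑ v, x v = 1)
    (hmax : ∀ y : α → ℝ, (∀ v, 0 ≤ y v) → (∑ v, y v = 1) →
      ∑ e ∈ H, ∏ v ∈ e, y v ≤ ∑ e ∈ H, ∏ v ∈ e, x v)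
    (hmin : ∀ y : α → ℝ, (∀ v, 0 ≤ y v) → (∑ v, y v = 1) →
      (∀ z : α → ℝ, (∀ v, 0 ≤ z v) → (∑ v, z v = 1) →
        ∑ e ∈ H, ∏ v ∈ e, z v ≤ ∑ e ∈ H, ∏ v ∈ e, y v) →
      (Finset.univ.filter (fun v => 0 < x v)).card ≤
        (Finset.univ.filter (fun v => 0 < y v)).card) :
    ∀ u v : α, 0 < x u → 0 < x v → u ≠ v → ∃ e ∈ H, u ∈ e ∧ v ∈ e := by
  intro u v hu hv huv
  by_contra hne
  push_neg at hne
  -- no edge contains both u and v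
  have hsep : ∀ e ∈ H, ¬(u ∈ e ∧ v ∈ e) := by
    intro e he h
    exact absurd h.2 (hne e he h.1)
  set A : ℝ := ∑ e ∈ H, (if u ∈ e then ∏ w ∈ e.erase u, x w else 0) with hA
  set B : ℝ := ∑ e ∈ H, (if v ∈ e then ∏ w ∈ e.erase v, x w else 0) with hB
  -- key linearity lemma
  have key : ∀ a b : ℝ,
      ∑ e ∈ H, ∏ w ∈ e, (fun w => if w = u then a else if w = v then b else x w) w
        = ∑ e ∈ H, ∏ w ∈ e, x w + (a - x u) * A + (b - x v) * B := by
    intro a b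
    rw [hA, hB, Finset.mul_sum, Finset.mul_sum, ← Finset.sum_add_distrib,
      ← Finset.sum_add_distrib]
    refine Finset.sum_congr rfl ?_
    intro e he
    set y : α → ℝ := fun w => if w = u then a else if w = v then b else x w with hy
    by_cases hue : u ∈ e
    · have hve : v ∉ e := fun hve => hsep e he ⟨hue, hve⟩
      have h1 : ∏ w ∈ e.erase u, y w = ∏ w ∈ e.erase u, x w := by
        refine Finset.prod_congr rfl ?_
        intro w hw
        have hwu : w ≠ u := Finset.ne_of_mem_erase hw
        have hwv : w ≠ v := fun h => hve (h ▸ Finset.mem_of_mem_erase hw)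
        simp [hy, hwu, hwv]
      rw [← Finset.mul_prod_erase e y hue, ← Finset.mul_prod_erase e x hue, h1]
      have : y u = a := by simp [hy]
      rw [this, if_pos hue, if_neg hve]
      ring
    · by_cases hve : v ∈ e
      · have h1 : ∏ w ∈ e.erase v, y w = ∏ w ∈ e.erase v, x w := by
          refine Finset.prod_congr rfl ?_
          intro w hw
          have hwv : w ≠ v := Finset.ne_of_mem_erase hw
          have hwu : w ≠ u := fun h => hue (h ▸ Finset.mem_of_mem_erase hw)
          simp [hy, hwu, hwv]
        rw [← Finset.mul_prod_erase e y hve, ← Finset.mul_prod_erase e x hve, h1]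
        have : y v = b := by simp [hy, huv.symm]
        rw [this, if_pos hve, if_neg hue]
        ring
      · have h1 : ∏ w ∈ e, y w = ∏ w ∈ e, x w := by
          refine Finset.prod_congr rfl ?_
          intro w hw
          have hwu : w ≠ u := fun h => hue (h ▸ hw)
          have hwv : w ≠ v := fun h => hve (h ▸ hw)
          simp [hy, hwu, hwv]
        rw [h1, if_neg hue, if_neg hve]
        ring
  -- sum lemma
  have sumkey : ∀ a b : ℝ,
      ∑ w, (fun w => if w = u then a else if w = v then b else x w) w
        = 1 + (a - x u) + (b - x v) := by
    intro a b
    set y : α → ℝ := fun w => if w = u then a else if w = v then b else x w with hy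
    have h1 : ∑ w, (y w - x w) = ∑ w ∈ ({u, v} : Finset α), (y w - x w) := by
      refine (Finset.sum_subset (Finset.subset_univ _) ?_).symm
      intro w _ hw
      have hwu : w ≠ u := fun h => hw (by simp [h])
      have hwv : w ≠ v := fun h => hw (by simp [h])
      simp [hy, hwu, hwv]
    rw [Finset.sum_sub_distrib, hx1] at h1
    rw [Finset.sum_pair huv] at h1
    have hyu : y u = a := by simp [hy]
    have hyv : y v = b := by simp [hy, huv.symm]
    rw [hyu, hyv] at h1
    linarith
  set s : ℝ := x u + x v with hs
  -- first perturbation: all mass to v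
  set y1 : α → ℝ := fun w => if w = u then 0 else if w = v then s else x w with hy1
  have hy10 : ∀ w, 0 ≤ y1 w := by
    intro w
    by_cases h1 : w = u
    · simp [hy1, h1]
    · by_cases h2 : w = v
      · simp [hy1, h1, h2]; positivity
      · simp [hy1, h1, h2]; exact hx0 w
  have hy11 : ∑ w, y1 w = 1 := by rw [sumkey 0 s]; ring
  have hP1 : ∑ e ∈ H, ∏ w ∈ e, y1 w = ∑ e ∈ H, ∏ w ∈ e, x w - x u * A + x u * B := by
    rw [key 0 s]; ring
  have hle1 : x u * B ≤ x u * A := by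
    have := hmax y1 hy10 hy11
    rw [hP1] at this; linarith
  -- second perturbation: all mass to u
  set y2 : α → ℝ := fun w => if w = u then s else if w = v then 0 else x w with hy2
  have hy20 : ∀ w, 0 ≤ y2 w := by
    intro w
    by_cases h1 : w = u
    · simp [hy2, h1]; positivity
    · by_cases h2 : w = v
      · simp [hy2, h1, h2, huv.symm]
      · simp [hy2, h1, h2]; exact hx0 w
  have hy21 : ∑ w, y2 w = 1 := by rw [sumkey s 0]; ring
  have hP2 : ∑ e ∈ H, ∏ w ∈ e, y2 w = ∑ e ∈ H, ∏ w ∈ e, x w + x v * A - x v * B := by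
    rw [key s 0]; ring
  have hle2 : x v * A ≤ x v * B := by
    have := hmax y2 hy20 hy21
    rw [hP2] at this; linarith
  have hAB : A = B := by
    have h1 : B ≤ A := le_of_mul_le_mul_left hle1 hu
    have h2 : A ≤ B := le_of_mul_le_mul_left hle2 hv
    linarith
  have hP1' : ∑ e ∈ H, ∏ w ∈ e, y1 w = ∑ e ∈ H, ∏ w ∈ e, x w := by
    rw [hP1, hAB]; ring
  have hmax1 : ∀ z : α → ℝ, (∀ v, 0 ≤ z v) → (∑ v, z v = 1) →
      ∑ e ∈ H, ∏ v ∈ e, z v ≤ ∑ e ∈ H, ∏ v ∈ e, y1 v := by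
    intro z hz0 hz1
    rw [hP1']
    exact hmax z hz0 hz1
  have hcard := hmin y1 hy10 hy11 hmax1
  -- support of y1 is support of x minus u
  have hsupp : (Finset.univ.filter (fun w => 0 < y1 w))
      = (Finset.univ.filter (fun w => 0 < x w)).erase u := by
    ext w
    simp only [Finset.mem_filter, Finset.mem_erase, Finset.mem_univ, true_and]
    constructor
    · intro hw
      by_cases h1 : w = u
      · simp [hy1, h1] at hw
      · by_cases h2 : w = v
        · exact ⟨h1, h2 ▸ hv⟩
        · simp [hy1, h1, h2] at hw
          exact ⟨h1, hw⟩
    · rintro ⟨h1, h2⟩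
      by_cases h3 : w = v
      · simp [hy1, h1, h3, huv.symm]; linarith [hs]
      · simpa [hy1, h1, h3] using h2
  rw [hsupp] at hcard
  have hmem : u ∈ Finset.univ.filter (fun w => 0 < x w) := by
    simp [hu]
  have := Finset.card_erase_lt_of_mem hmem
  omega
end
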